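/- arXiv:1109.3832 — 7 statements merged into one kernel-verified Lean document; each statement's English description precedes it below -/
import Mathlib

section
/- Let (B_n, C_n) be a minimizing sequence for 𝔍_red that converges, B_n → B̃ and C_n → C̃ as n → ∞. If the rank condition liminf_{n→∞} rank(B_n ⊙ C_n) ≤ rank(B̃ ⊙ C̃) holds, then (B̃, C̃) is a minimizer of 𝔍_red, and consequently a minimizer of the full least-squares functional 𝔍 exists. -/
open Finset Filter

/-- The CP least-squares functional. -/
noncomputable def Jfun {I J K R : ℕ} (T : Fin I → Fin J → Fin K → ℝ)
    (A : Matrix (Fin I) (Fin R) ℝ) (B : Matrix (Fin J) (Fin R) ℝ)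
    (C : Matrix (Fin K) (Fin R) ℝ) : ℝ :=
  (1 / 2) * ∑ i, ∑ j, ∑ k, (T i j k - ∑ r, A i r * B j r * C k r) ^ 2

/-- The reduced functional `𝔍_red(B,C) = inf_A 𝔍(A,B,C)`. -/
noncomputable def Jred {I J K R : ℕ} (T : Fin I → Fin J → Fin K → ℝ)
    (B : Matrix (Fin J) (Fin R) ℝ) (C : Matrix (Fin K) (Fin R) ℝ) : ℝ :=
  ⨅ A : Matrix (Fin I) (Fin R) ℝ, Jfun T A B C

/-- The Khatri–Rao product `B ⊙ C`. -/
noncomputable def khatriRao {J K R : ℕ} (B : Matrix (Fin J) (Fin R) ℝ)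
    (C : Matrix (Fin K) (Fin R) ℝ) : Matrix (Fin J × Fin K) (Fin R) ℝ :=
  Matrix.of fun p r => B p.1 r * C p.2 r

section Aux
open Matrix

attribute [local instance] Matrix.frobeniusNormedAddCommGroup Matrix.frobeniusNormedSpace

/-- squared Frobenius norm is the sum of squares of the entries. -/
lemma frob_sq {m n : Type*} [Fintype m] [Fintype n] (X : Matrix m n ℝ) :
    ‖X‖ ^ 2 = ∑ i, ∑ j, X i j ^ 2 := by
  have h1 : ‖X‖ = (∑ i, ∑ j, ‖X i j‖ ^ (2 : ℝ)) ^ (1 / 2 : ℝ) :=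
    Matrix.frobenius_norm_def X
  have h2 : ∀ (i : m) (j : n), ‖X i j‖ ^ (2 : ℝ) = X i j ^ 2 := by
    intro i j; rw [Real.rpow_two, Real.norm_eq_abs, sq_abs]
  simp_rw [h1, h2]
  rw [← Real.rpow_natCast _ 2, ← Real.rpow_mul (by positivity)]
  norm_num

/-- vectorize the tensor as an `I × (J×K)` matrix. -/
noncomputable def Tmat {I J K : ℕ} (T : Fin I → Fin J → Fin K → ℝ) :
    Matrix (Fin I) (Fin J × Fin K) ℝ :=
  Matrix.of fun i p => T i p.1 p.2

lemma jfun_eq {I J K R : ℕ} (T : Fin I → Fin J → Fin K → ℝ)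
    (A : Matrix (Fin I) (Fin R) ℝ) (B : Matrix (Fin J) (Fin R) ℝ)
    (C : Matrix (Fin K) (Fin R) ℝ) :
    Jfun T A B C = (1 / 2) * ‖Tmat T - A * (khatriRao B C)ᵀ‖ ^ 2 := by
  rw [frob_sq, Jfun]
  congr 1
  apply Finset.sum_congr rfl
  intro i _
  rw [Fintype.sum_prod_type]
  apply Finset.sum_congr rfl
  intro j _
  apply Finset.sum_congr rfl
  intro k _
  congr 1
  simp [Tmat, Matrix.sub_apply, Matrix.mul_apply, khatriRao, mul_assoc]

lemma jfun_nonneg {I J K R : ℕ} (T : Fin I → Fin J → Fin K → ℝ)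
    (A : Matrix (Fin I) (Fin R) ℝ) (B : Matrix (Fin J) (Fin R) ℝ)
    (C : Matrix (Fin K) (Fin R) ℝ) : 0 ≤ Jfun T A B C := by
  rw [Jfun]; positivity


/-- the infimum over `A` is attained. -/
lemma exists_opt {I J K R : ℕ} (T : Fin I → Fin J → Fin K → ℝ)
    (B : Matrix (Fin J) (Fin R) ℝ) (C : Matrix (Fin K) (Fin R) ℝ) :
    ∃ A0, ∀ A, Jfun T A0 B C ≤ Jfun T A B C := by
  set M := khatriRao B C with hM
  let L : Matrix (Fin I) (Fin R) ℝ →ₗ[ℝ] Matrix (Fin I) (Fin J × Fin K) ℝ :=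
    { toFun := fun A => A * Mᵀ
      map_add' := fun x y => Matrix.add_mul x y Mᵀ
      map_smul' := fun c x => Matrix.smul_mul c x Mᵀ }
  have hcl : IsClosed ((LinearMap.range L : Submodule ℝ _) :
      Set (Matrix (Fin I) (Fin J × Fin K) ℝ)) :=
    (LinearMap.range L).closed_of_finiteDimensional
  obtain ⟨y, hymem, hy⟩ :=
    hcl.exists_infDist_eq_dist ⟨0, Submodule.zero_mem _⟩ (Tmat T)
  obtain ⟨A0, hA0⟩ := hymem
  refine ⟨A0, fun A => ?_⟩
  rw [jfun_eq, jfun_eq]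
  have h1 : dist (Tmat T) (A0 * Mᵀ) ≤ dist (Tmat T) (A * Mᵀ) := by
    have : A0 * Mᵀ = y := hA0
    rw [this, ← hy]
    exact Metric.infDist_le_dist_of_mem ⟨A, rfl⟩
  rw [dist_eq_norm, dist_eq_norm] at h1
  have h2 : ‖Tmat T - A0 * Mᵀ‖ ^ 2 ≤ ‖Tmat T - A * Mᵀ‖ ^ 2 :=
    pow_le_pow_left₀ (norm_nonneg _) h1 2
  linarith

lemma jred_le_jfun {I J K R : ℕ} (T : Fin I → Fin J → Fin K → ℝ)
    (B : Matrix (Fin J) (Fin R) ℝ) (C : Matrix (Fin K) (Fin R) ℝ)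
    (A : Matrix (Fin I) (Fin R) ℝ) : Jred T B C ≤ Jfun T A B C :=
  ciInf_le ⟨0, by rintro x ⟨A', rfl⟩; exact jfun_nonneg T A' B C⟩ A

lemma jred_nonneg {I J K R : ℕ} (T : Fin I → Fin J → Fin K → ℝ)
    (B : Matrix (Fin J) (Fin R) ℝ) (C : Matrix (Fin K) (Fin R) ℝ) :
    0 ≤ Jred T B C :=
  le_ciInf fun A => jfun_nonneg T A B C

lemma jred_eq_opt {I J K R : ℕ} (T : Fin I → Fin J → Fin K → ℝ)
    (B : Matrix (Fin J) (Fin R) ℝ) (C : Matrix (Fin K) (Fin R) ℝ)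
    (A0 : Matrix (Fin I) (Fin R) ℝ) (h : ∀ A, Jfun T A0 B C ≤ Jfun T A B C) :
    Jred T B C = Jfun T A0 B C :=
  le_antisymm (jred_le_jfun T B C A0) (le_ciInf h)

/-- Gram determinant nonzero iff columns independent. -/
lemma gram_det_ne_zero_iff {m ι : Type*} [Fintype m] [Fintype ι] [DecidableEq ι]
    (P : Matrix m ι ℝ) :
    (Pᵀ * P).det ≠ 0 ↔ LinearIndependent ℝ (fun i => Pᵀ i) := by
  have key : ∀ g : ι → ℝ, P *ᵥ g = ∑ i, g i • Pᵀ i := by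
    intro g; ext p
    simp [Matrix.mulVec, dotProduct, Finset.sum_apply, mul_comm]
  constructor
  · intro hdet
    rw [Fintype.linearIndependent_iff]
    intro g hg
    have h2 : (Pᵀ * P) *ᵥ g = 0 := by
      rw [← Matrix.mulVec_mulVec, key, hg, Matrix.mulVec_zero]
    have hg0 : g = 0 := by
      by_contra hg0
      exact hdet (Matrix.exists_mulVec_eq_zero_iff.mp ⟨g, hg0, h2⟩)
    intro i; rw [hg0]; rfl
  · intro hind hdet
    obtain ⟨v, hv0, hv⟩ := Matrix.exists_mulVec_eq_zero_iff.mpr hdet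
    have hPv : P *ᵥ v = 0 := by
      have h0 : v ⬝ᵥ ((Pᵀ * P) *ᵥ v) = 0 := by rw [hv, dotProduct_zero]
      rw [← Matrix.mulVec_mulVec, Matrix.dotProduct_mulVec,
        Matrix.vecMul_transpose] at h0
      exact dotProduct_self_eq_zero.mp h0
    refine hv0 ?_
    have := Fintype.linearIndependent_iff.mp hind v (by rw [← key, hPv])
    ext i; exact this i

/-- projection identity: if the columns of `N` lie in the span of the columns of `P`
and the Gram matrix of `P` is invertible, then `P (PᵀP)⁻¹ Pᵀ` fixes `N`. -/
lemma proj_eq {m n ι : Type*} [Fintype m] [Fintype n] [Fintype ι] [DecidableEq ι]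
    (N : Matrix m n ℝ) (P : Matrix m ι ℝ) (hdet : (Pᵀ * P).det ≠ 0)
    (hspan : ∀ r, Nᵀ r ∈ Submodule.span ℝ (Set.range Pᵀ)) :
    Nᵀ * (P * (Pᵀ * P)⁻¹ * Pᵀ) = Nᵀ := by
  have hW : ∀ r, ∃ c : ι → ℝ, ∑ i, c i • Pᵀ i = Nᵀ r := by
    intro r
    exact (Submodule.mem_span_range_iff_exists_fun ℝ).mp (hspan r)
  choose c hc using hW
  let W : Matrix ι n ℝ := Matrix.of fun i r => c r i
  have hNW : N = P * W := by
    ext p r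
    have h := congrFun (hc r) p
    simp only [Finset.sum_apply, Pi.smul_apply, smul_eq_mul,
      Matrix.transpose_apply] at h
    simp only [Matrix.mul_apply, W, Matrix.of_apply]
    rw [← h]
    exact Finset.sum_congr rfl fun i _ => mul_comm _ _
  have hG : (Pᵀ * P) * (Pᵀ * P)⁻¹ = 1 :=
    Matrix.mul_nonsing_inv _ (isUnit_iff_ne_zero.mpr hdet)
  rw [hNW, Matrix.transpose_mul]
  calc Wᵀ * Pᵀ * (P * (Pᵀ * P)⁻¹ * Pᵀ)
      = Wᵀ * ((Pᵀ * P) * (Pᵀ * P)⁻¹ * Pᵀ) := by simp only [Matrix.mul_assoc]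
    _ = Wᵀ * Pᵀ := by rw [hG, Matrix.one_mul]



set_option maxHeartbeats 1000000 in
/-- If a convergent minimizing sequence `(Bₙ,Cₙ) → (B̃,C̃)` of `𝔍_red` satisfies the rank
condition `liminf rank(Bₙ⊙Cₙ) ≤ rank(B̃⊙C̃)`, then `(B̃,C̃)` minimizes `𝔍_red` and a
minimizer of the full least-squares functional `𝔍` exists. -/
theorem stmt6 (I J K R : ℕ) (hI : 0 < I) (hJ : 0 < J) (hK : 0 < K) (hR : 0 < R)
    (T : Fin I → Fin J → Fin K → ℝ)
    (Bn : ℕ → Matrix (Fin J) (Fin R) ℝ) (Cn : ℕ → Matrix (Fin K) (Fin R) ℝ)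
    (Bt : Matrix (Fin J) (Fin R) ℝ) (Ct : Matrix (Fin K) (Fin R) ℝ)
    (hmin : Tendsto (fun n => Jred T (Bn n) (Cn n)) atTop
      (nhds (⨅ p : Matrix (Fin J) (Fin R) ℝ × Matrix (Fin K) (Fin R) ℝ, Jred T p.1 p.2)))
    (hBconv : Tendsto Bn atTop (nhds Bt))
    (hCconv : Tendsto Cn atTop (nhds Ct))
    (hrank : Filter.liminf (fun n => (khatriRao (Bn n) (Cn n)).rank) atTop ≤
      (khatriRao Bt Ct).rank) :
    (∀ (B : Matrix (Fin J) (Fin R) ℝ) (C : Matrix (Fin K) (Fin R) ℝ),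
      Jred T Bt Ct ≤ Jred T B C) ∧
    (∃ (A : Matrix (Fin I) (Fin R) ℝ) (B : Matrix (Fin J) (Fin R) ℝ)
      (C : Matrix (Fin K) (Fin R) ℝ),
      ∀ (A' : Matrix (Fin I) (Fin R) ℝ) (B' : Matrix (Fin J) (Fin R) ℝ)
        (C' : Matrix (Fin K) (Fin R) ℝ), Jfun T A B C ≤ Jfun T A' B' C') := by
  classical
  set gInf : ℝ :=
    ⨅ p : Matrix (Fin J) (Fin R) ℝ × Matrix (Fin K) (Fin R) ℝ, Jred T p.1 p.2 with hgInf
  have hgle : ∀ (B : Matrix (Fin J) (Fin R) ℝ) (C : Matrix (Fin K) (Fin R) ℝ),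
      gInf ≤ Jred T B C := fun B C =>
    ciInf_le ⟨0, by rintro x ⟨p, rfl⟩; exact jred_nonneg T p.1 p.2⟩ (B, C)
  -- It suffices to produce `At` with `Jfun T At Bt Ct ≤ gInf`.
  suffices hAt : ∃ At, Jfun T At Bt Ct ≤ gInf by
    obtain ⟨At, hAt⟩ := hAt
    constructor
    · intro B C
      exact le_trans (le_trans (jred_le_jfun T Bt Ct At) hAt) (hgle B C)
    · obtain ⟨A0, hA0⟩ := exists_opt T Bt Ct
      refine ⟨A0, Bt, Ct, fun A' B' C' => ?_⟩
      calc Jfun T A0 Bt Ct ≤ Jfun T At Bt Ct := hA0 At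
        _ ≤ gInf := hAt
        _ ≤ Jred T B' C' := hgle B' C'
        _ ≤ Jfun T A' B' C' := jred_le_jfun T B' C' A'
  -- notation
  set Mn : ℕ → Matrix (Fin J × Fin K) (Fin R) ℝ :=
    fun n => khatriRao (Bn n) (Cn n) with hMn
  set Mt : Matrix (Fin J × Fin K) (Fin R) ℝ := khatriRao Bt Ct with hMt
  have hpair : Tendsto (fun n => (Bn n, Cn n)) atTop (nhds (Bt, Ct)) :=
    hBconv.prodMk_nhds hCconv
  have hMcont : Continuous (fun q : Matrix (Fin J) (Fin R) ℝ ×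
      Matrix (Fin K) (Fin R) ℝ => khatriRao q.1 q.2) := by
    apply continuous_matrix
    intro p r
    show Continuous fun q : Matrix (Fin J) (Fin R) ℝ × Matrix (Fin K) (Fin R) ℝ =>
      q.1 p.1 r * q.2 p.2 r
    exact Continuous.mul
      ((continuous_apply r).comp ((continuous_apply p.1).comp continuous_fst))
      ((continuous_apply r).comp ((continuous_apply p.2).comp continuous_snd))
  have hMconv : Tendsto Mn atTop (nhds Mt) :=
    (hMcont.tendsto (Bt, Ct)).comp hpair
  -- choose a column basis of the limit Khatri-Rao matrix
  obtain ⟨b, hbsub, hbspan, hbind⟩ := exists_linearIndependent ℝ (Set.range Mtᵀ)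
  haveI : Fintype b := ((Set.finite_range Mtᵀ).subset hbsub).fintype
  have hbchoice : ∀ v : b, ∃ r, Mtᵀ r = (v : (Fin J × Fin K) → ℝ) := fun v => hbsub v.2
  choose e he using hbchoice
  set sub : Matrix (Fin J × Fin K) (Fin R) ℝ → Matrix (Fin J × Fin K) b ℝ :=
    fun N => N.submatrix id e with hsub
  set G : Matrix (Fin J × Fin K) (Fin R) ℝ → Matrix b b ℝ :=
    fun N => (sub N)ᵀ * (sub N) with hG
  have hGt_det : (G Mt).det ≠ 0 := by
    rw [hG]
    apply (gram_det_ne_zero_iff (sub Mt)).mpr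
    have hcols : (fun v : b => (sub Mt)ᵀ v) = (fun v : b => (v : (Fin J × Fin K) → ℝ)) := by
      funext v; ext p
      exact congrFun (he v) p
    rw [hcols]
    exact hbind
  have hb_card : Fintype.card b = Mt.rank := by
    rw [Matrix.rank_eq_finrank_span_cols, Matrix.col, ← hbspan,
      finrank_span_set_eq_card hbind, Set.toFinset_card]
  -- continuity of the Gram determinant
  have hGcont : Continuous G := by
    have h1 : Continuous (fun N : Matrix (Fin J × Fin K) (Fin R) ℝ => sub N) :=
      continuous_id.matrix_submatrix id e
    exact h1.matrix_transpose.matrix_mul h1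
  have hdet_tend : Tendsto (fun n => (G (Mn n)).det) atTop (nhds (G Mt).det) :=
    ((hGcont.matrix_det).tendsto Mt).comp hMconv
  have hdet_ev : ∀ᶠ n in atTop, (G (Mn n)).det ≠ 0 := hdet_tend.eventually_ne hGt_det
  -- rank is frequently at most `card b`
  have hfreq : ∃ᶠ n in atTop, (Mn n).rank ≤ Fintype.card b := by
    by_contra h
    have hev : ∀ᶠ n in atTop, Fintype.card b + 1 ≤ (Mn n).rank := by
      have := (not_frequently.mp h)
      filter_upwards [this] with n hn
      omega
    have hco : IsCoboundedUnder (· ≥ ·) atTop (fun n => (Mn n).rank) :=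
      isCoboundedUnder_ge_of_le atTop (x := Fintype.card (Fin R))
        (fun n => Matrix.rank_le_card_width (Mn n))
    have h2 : (Fintype.card b + 1 : ℕ) ≤ liminf (fun n => (Mn n).rank) atTop :=
      le_liminf_of_le hco hev
    have h3 := le_trans h2 hrank
    rw [← hb_card] at h3
    omega
  obtain ⟨φ, hφ, hP⟩ := extraction_of_frequently_atTop (hfreq.and_eventually hdet_ev)
  -- span property along the subsequence
  have hspan_k : ∀ k r, ((Mn (φ k))ᵀ) r ∈ Submodule.span ℝ (Set.range (sub (Mn (φ k)))ᵀ) := by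
    intro k
    have hind : LinearIndependent ℝ (fun v : b => (sub (Mn (φ k)))ᵀ v) :=
      (gram_det_ne_zero_iff (sub (Mn (φ k)))).mp (hP k).2
    have hle : Submodule.span ℝ (Set.range (sub (Mn (φ k)))ᵀ) ≤
        Submodule.span ℝ (Set.range (Mn (φ k))ᵀ) := by
      apply Submodule.span_mono
      rintro _ ⟨v, rfl⟩
      exact ⟨e v, rfl⟩
    have heq : Submodule.span ℝ (Set.range (sub (Mn (φ k)))ᵀ) =
        Submodule.span ℝ (Set.range (Mn (φ k))ᵀ) := by
      apply Submodule.eq_of_le_of_finrank_le hle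
      rw [show Set.range (Mn (φ k))ᵀ = Set.range (Mn (φ k)).col from rfl,
        ← Matrix.rank_eq_finrank_span_cols]
      calc (Mn (φ k)).rank ≤ Fintype.card b := (hP k).1
        _ = Module.finrank ℝ (Submodule.span ℝ (Set.range (sub (Mn (φ k)))ᵀ)) :=
          (finrank_span_eq_card hind).symm
    intro r
    rw [heq]
    exact Submodule.subset_span ⟨r, rfl⟩
  -- optimal `A`'s along the sequence
  choose A hA using fun n => exists_opt T (Bn n) (Cn n)
  set v : ℕ → Matrix (Fin I) (Fin J × Fin K) ℝ := fun k => A (φ k) * (Mn (φ k))ᵀ with hv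
  have hJred_eq : ∀ n, Jred T (Bn n) (Cn n) = (1 / 2) * ‖Tmat T - A n * (Mn n)ᵀ‖ ^ 2 := by
    intro n
    rw [jred_eq_opt T (Bn n) (Cn n) (A n) (hA n), jfun_eq]
  -- boundedness of `v`
  have hvb : ∀ k, v k ∈ Metric.closedBall (0 : Matrix (Fin I) (Fin J × Fin K) ℝ)
      (2 * ‖Tmat T‖) := by
    intro k
    have h1 : (1 / 2 : ℝ) * ‖Tmat T - v k‖ ^ 2 ≤ (1 / 2) * ‖Tmat T‖ ^ 2 := by
      have h0 := hA (φ k) 0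
      rw [jfun_eq, jfun_eq] at h0
      simpa [Matrix.zero_mul, sub_zero] using h0
    have h2 : ‖Tmat T - v k‖ ≤ ‖Tmat T‖ := by
      nlinarith [norm_nonneg (Tmat T - v k), norm_nonneg (Tmat T)]
    have h3 : ‖v k‖ ≤ 2 * ‖Tmat T‖ := by
      have h4 : ‖v k‖ - ‖Tmat T‖ ≤ ‖v k - Tmat T‖ := norm_sub_norm_le _ _
      rw [norm_sub_rev] at h4
      linarith
    simpa [Metric.mem_closedBall, dist_zero_right] using h3
  obtain ⟨vb, -, ψ, hψ, hvtend⟩ :=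
    tendsto_subseq_of_bounded Metric.isBounded_closedBall hvb
  -- limits along the double subsequence
  have hφψ : Tendsto (fun k => φ (ψ k)) atTop atTop :=
    (hφ.comp hψ).tendsto_atTop
  have hM2 : Tendsto (fun k => Mn (φ (ψ k))) atTop (nhds Mt) := hMconv.comp hφψ
  have hsubcont : Continuous (fun N : Matrix (Fin J × Fin K) (Fin R) ℝ => sub N) :=
    continuous_id.matrix_submatrix id e
  have hsub2 : Tendsto (fun k => sub (Mn (φ (ψ k)))) atTop (nhds (sub Mt)) :=
    (hsubcont.tendsto Mt).comp hM2
  have hG2 : Tendsto (fun k => G (Mn (φ (ψ k)))) atTop (nhds (G Mt)) :=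
    (hGcont.tendsto Mt).comp hM2
  have hGinv : Tendsto (fun k => (G (Mn (φ (ψ k))))⁻¹) atTop (nhds (G Mt)⁻¹) := by
    have hCA : ContinuousAt Inv.inv (G Mt) := by
      apply continuousAt_matrix_inv
      rw [Ring.inverse_eq_inv']
      exact continuousAt_inv₀ hGt_det
    exact hCA.tendsto.comp hG2
  -- the projection fixes `v (ψ k)`
  have hwk : ∀ k, v (ψ k) * (sub (Mn (φ (ψ k))) * (G (Mn (φ (ψ k))))⁻¹ *
      (sub (Mn (φ (ψ k))))ᵀ) = v (ψ k) := by
    intro k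
    have hp := proj_eq (Mn (φ (ψ k))) (sub (Mn (φ (ψ k)))) (hP (ψ k)).2 (hspan_k (ψ k))
    calc A (φ (ψ k)) * (Mn (φ (ψ k)))ᵀ * (sub (Mn (φ (ψ k))) * (G (Mn (φ (ψ k))))⁻¹ *
        (sub (Mn (φ (ψ k))))ᵀ)
        = A (φ (ψ k)) * ((Mn (φ (ψ k)))ᵀ * (sub (Mn (φ (ψ k))) * (G (Mn (φ (ψ k))))⁻¹ *
          (sub (Mn (φ (ψ k))))ᵀ)) := by rw [Matrix.mul_assoc]
      _ = A (φ (ψ k)) * (Mn (φ (ψ k)))ᵀ := by rw [hp]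
  -- limit of the projected sequence
  set wlim : Matrix (Fin I) (Fin J × Fin K) ℝ :=
    vb * (sub Mt * (G Mt)⁻¹ * (sub Mt)ᵀ) with hwlim
  have hwtend : Tendsto (fun k => v (ψ k) * (sub (Mn (φ (ψ k))) * (G (Mn (φ (ψ k))))⁻¹ *
      (sub (Mn (φ (ψ k))))ᵀ)) atTop (nhds wlim) := by
    have hmul : Continuous (fun q : (Matrix (Fin I) (Fin J × Fin K) ℝ) ×
        (Matrix (Fin J × Fin K) b ℝ) × (Matrix b b ℝ) =>
        q.1 * (q.2.1 * q.2.2 * q.2.1ᵀ)) := by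
      exact continuous_fst.matrix_mul
        (((continuous_fst.comp continuous_snd).matrix_mul
          (continuous_snd.comp continuous_snd)).matrix_mul
          (continuous_fst.comp continuous_snd).matrix_transpose)
    have hq : Tendsto (fun k => (v (ψ k), (sub (Mn (φ (ψ k))), (G (Mn (φ (ψ k))))⁻¹)))
        atTop (nhds (vb, (sub Mt, (G Mt)⁻¹))) :=
      hvtend.prodMk_nhds (hsub2.prodMk_nhds hGinv)
    exact (hmul.tendsto _).comp hq
  have hwb : wlim = vb :=
    tendsto_nhds_unique (hwtend.congr hwk) hvtend
  -- build the limiting coefficient matrix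
  set F : Matrix b (Fin R) ℝ := Matrix.of fun vv r => if e vv = r then 1 else 0 with hF0
  have hF : F * Mtᵀ = (sub Mt)ᵀ := by
    ext vv p
    simp [hF0, Matrix.mul_apply, ite_mul, one_mul, zero_mul, Finset.sum_ite_eq,
      hsub, Matrix.submatrix_apply]
  refine ⟨vb * (sub Mt * (G Mt)⁻¹ * F), ?_⟩
  have hAtMt : vb * (sub Mt * (G Mt)⁻¹ * F) * Mtᵀ = vb := by
    calc vb * (sub Mt * (G Mt)⁻¹ * F) * Mtᵀ
        = vb * (sub Mt * ((G Mt)⁻¹ * (F * Mtᵀ))) := by simp only [Matrix.mul_assoc]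
      _ = vb * (sub Mt * ((G Mt)⁻¹ * (sub Mt)ᵀ)) := by rw [hF]
      _ = wlim := by rw [hwlim]; simp only [Matrix.mul_assoc]
      _ = vb := hwb
  -- value of the candidate equals the infimum
  have hval : Tendsto (fun k => Jred T (Bn (φ (ψ k))) (Cn (φ (ψ k)))) atTop (nhds gInf) :=
    hmin.comp hφψ
  have hval2 : Tendsto (fun k => (1 / 2 : ℝ) * ‖Tmat T - v (ψ k)‖ ^ 2) atTop
      (nhds ((1 / 2) * ‖Tmat T - vb‖ ^ 2)) := by
    have h1 : Tendsto (fun k => Tmat T - v (ψ k)) atTop (nhds (Tmat T - vb)) :=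
      tendsto_const_nhds.sub hvtend
    exact ((h1.norm.pow 2).const_mul _)
  have hval3 : Tendsto (fun k => (1 / 2 : ℝ) * ‖Tmat T - v (ψ k)‖ ^ 2) atTop (nhds gInf) := by
    refine hval.congr fun k => ?_
    rw [hJred_eq (φ (ψ k))]
  have hfin : (1 / 2 : ℝ) * ‖Tmat T - vb‖ ^ 2 = gInf :=
    tendsto_nhds_unique hval2 hval3
  rw [jfun_eq]
  rw [show (khatriRao Bt Ct : Matrix (Fin J × Fin K) (Fin R) ℝ) = Mt from rfl]
  rw [hAtMt, hfin]

end Aux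
end

section
/- If b ∈ ℝ^J, c ∈ ℝ^K with ‖b‖ = 1 and ‖c‖ = 1 maximize the function f(b,c) = Σ_{α,β,γ,δ} 𝓜_{αβγδ} b_α c_β b_γ c_δ over the product of unit spheres S^{J−1} × S^{K−1}, then there exists a real number λ such that Σ_{β,γ,δ} 𝓜_{αβγδ} c_β b_γ c_δ = λ·b_α for all α = 1,…,J, and Σ_{α,γ,δ} 𝓜_{αβγδ} b_α b_γ c_δ = λ·c_β for all β = 1,…,K. -/
open Finset

/-- The fourth-order tensor `𝓜_{αβγδ} = ∑ᵢ T_{iαβ} T_{iγδ}`. -/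
noncomputable def M4 {I J K : ℕ} (T : Fin I → Fin J → Fin K → ℝ)
    (α γ : Fin J) (β δ : Fin K) : ℝ :=
  ∑ i, T i α β * T i γ δ

/-- The functional `f(b,c) = ∑ 𝓜_{αβγδ} b_α c_β b_γ c_δ`. -/
noncomputable def fBC {I J K : ℕ} (T : Fin I → Fin J → Fin K → ℝ)
    (b : Fin J → ℝ) (c : Fin K → ℝ) : ℝ :=
  ∑ α, ∑ β, ∑ γ, ∑ δ, M4 T α γ β δ * b α * c β * b γ * c δ



private lemma quad_scale {n : ℕ} (G : Fin n → Fin n → ℝ) (lam : ℝ)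
    (hmax : ∀ x : Fin n → ℝ, (∑ j, x j ^ 2 = 1) →
      ∑ p, ∑ q, G p q * x p * x q ≤ lam) :
    ∀ x : Fin n → ℝ, ∑ p, ∑ q, G p q * x p * x q ≤ lam * ∑ j, x j ^ 2 := by
  intro x
  set s := ∑ j, x j ^ 2 with hs
  have hs0 : 0 ≤ s := Finset.sum_nonneg fun _ _ => sq_nonneg _
  rcases eq_or_lt_of_le hs0 with h0 | hpos
  · have hx : ∀ j, x j = 0 := by
      intro j
      have := (Finset.sum_eq_zero_iff_of_nonneg (fun i _ => sq_nonneg (x i))).1 h0.symm j (Finset.mem_univ j)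
      exact pow_eq_zero_iff (by norm_num) |>.1 this
    have : ∑ p, ∑ q, G p q * x p * x q = 0 := by
      apply Finset.sum_eq_zero; intro p _
      apply Finset.sum_eq_zero; intro q _
      rw [hx p]; ring
    rw [this, ← h0]; simp
  · set x' : Fin n → ℝ := fun j => x j / Real.sqrt s with hx'
    have hss : Real.sqrt s * Real.sqrt s = s := Real.mul_self_sqrt hs0
    have hsne : Real.sqrt s ≠ 0 := by positivity
    have hnorm : ∑ j, x' j ^ 2 = 1 := by
      have : ∑ j, x' j ^ 2 = s / s := by
        rw [Finset.sum_div]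
        refine Finset.sum_congr rfl fun j _ => ?_
        simp only [hx']
        rw [div_pow, Real.sq_sqrt hs0]
      rw [this, div_self (ne_of_gt hpos)]
    have hQ : ∑ p, ∑ q, G p q * x' p * x' q = (∑ p, ∑ q, G p q * x p * x q) / s := by
      rw [Finset.sum_div]
      refine Finset.sum_congr rfl fun p _ => ?_
      rw [Finset.sum_div]
      refine Finset.sum_congr rfl fun q _ => ?_
      simp only [hx']
      field_simp
      rw [Real.sq_sqrt hs0]; ring
    have h := hmax x' hnorm
    rw [hQ] at h
    have h2 := mul_le_mul_of_nonneg_right h hs0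
    rwa [div_mul_cancel₀ _ (ne_of_gt hpos)] at h2

private lemma quad_max {n : ℕ} (G : Fin n → Fin n → ℝ)
    (hsym : ∀ p q, G p q = G q p)
    (b : Fin n → ℝ) (hb : ∑ j, b j ^ 2 = 1)
    (hmax : ∀ x : Fin n → ℝ, (∑ j, x j ^ 2 = 1) →
      ∑ p, ∑ q, G p q * x p * x q ≤ ∑ p, ∑ q, G p q * b p * b q)
    (α : Fin n) :
    ∑ q, G α q * b q = (∑ p, ∑ q, G p q * b p * b q) * b α := by
  set lam := ∑ p, ∑ q, G p q * b p * b q with hlam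
  set g := ∑ q, G α q * b q with hg
  have key := quad_scale G lam (by simpa using hmax)
  -- expansion along direction e_α
  have H : ∀ t : ℝ, 2 * t * (g - lam * b α) ≤ t ^ 2 * (lam - G α α) := by
    intro t
    set x : Fin n → ℝ := fun j => b j + (if j = α then t else 0) with hx
    have hSx : ∀ p, ∑ q, G p q * x q = (∑ q, G p q * b q) + t * G p α := by
      intro p
      have h1 : ∀ q, G p q * x q = G p q * b q + (if q = α then G p q * t else 0) := by
        intro q; by_cases h : q = α <;> simp [hx, h] <;> ring
      rw [Finset.sum_congr rfl fun q _ => h1 q, Finset.sum_add_distrib,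
        Finset.sum_ite_eq' Finset.univ α (fun q => G p q * t)]
      simp [mul_comm]
    have hQx : ∑ p, ∑ q, G p q * x p * x q
        = ∑ p, x p * ((∑ q, G p q * b q) + t * G p α) := by
      refine Finset.sum_congr rfl fun p _ => ?_
      rw [← hSx p, Finset.mul_sum]
      exact Finset.sum_congr rfl fun q _ => by ring
    have h2 : ∀ p, x p * ((∑ q, G p q * b q) + t * G p α)
        = b p * ((∑ q, G p q * b q) + t * G p α)
          + (if p = α then t * ((∑ q, G α q * b q) + t * G α α) else 0) := by
      intro p; by_cases h : p = α <;> simp [hx, h] <;> ring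
    have hQb : ∑ p, b p * (∑ q, G p q * b q) = lam := by
      rw [hlam]
      refine Finset.sum_congr rfl fun p _ => ?_
      rw [Finset.mul_sum]
      exact Finset.sum_congr rfl fun q _ => by ring
    have hGcol : ∑ p, b p * G p α = g := by
      rw [hg]
      refine Finset.sum_congr rfl fun p _ => ?_
      rw [hsym p α]; ring
    have hQexp : ∑ p, ∑ q, G p q * x p * x q = lam + 2 * t * g + t ^ 2 * G α α := by
      rw [hQx, Finset.sum_congr rfl fun p _ => h2 p, Finset.sum_add_distrib,
        Finset.sum_ite_eq' Finset.univ α (fun _ => t * ((∑ q, G α q * b q) + t * G α α))]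
      have : ∑ p, b p * ((∑ q, G p q * b q) + t * G p α)
          = (∑ p, b p * (∑ q, G p q * b q)) + t * ∑ p, b p * G p α := by
        rw [Finset.mul_sum, ← Finset.sum_add_distrib]
        exact Finset.sum_congr rfl fun p _ => by ring
      rw [this, hQb, hGcol]
      simp only [Finset.mem_univ, if_true, ← hg]
      ring
    have hnorm : ∑ j, x j ^ 2 = 1 + 2 * t * b α + t ^ 2 := by
      have h3 : ∀ j, x j ^ 2 = b j ^ 2 + (if j = α then 2 * t * b j + t ^ 2 else 0) := by
        intro j; by_cases h : j = α <;> simp [hx, h] <;> ring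
      rw [Finset.sum_congr rfl fun j _ => h3 j, Finset.sum_add_distrib, hb,
        Finset.sum_ite_eq' Finset.univ α (fun j => 2 * t * b j + t ^ 2)]
      simp only [Finset.mem_univ, if_true]
      ring
    have := key x
    rw [hQexp, hnorm] at this
    nlinarith [this]
  have hA : 0 ≤ lam - G α α := by
    have h1 := H 1
    have h2 := H (-1)
    nlinarith
  set C := g - lam * b α with hC
  set A := lam - G α α with hA'
  have hA1 : 0 < A + 1 := by linarith
  have ht := H (C / (A + 1))
  have hC0 : C = 0 := by
    rcases eq_or_ne C 0 with h | h
    · exact h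
    · exfalso
      have hC2 : 0 < C ^ 2 := by positivity
      have hm := mul_le_mul_of_nonneg_right ht (sq_nonneg (A + 1))
      have e1 : (2 * (C / (A + 1)) * C) * (A + 1) ^ 2 = 2 * C ^ 2 * (A + 1) := by
        field_simp
      have e2 : ((C / (A + 1)) ^ 2 * A) * (A + 1) ^ 2 = C ^ 2 * A := by
        field_simp
      rw [e1, e2] at hm
      nlinarith
  have : g = lam * b α := by linarith [hC0]
  simpa [mul_comm] using this

/-- If unit vectors `b, c` maximize `f(b,c) = 𝓜 •(b,c,b,c)` over the product of unit
spheres, then there exists `λ` with `𝓜 •₂,₃,₄ (c,b,c) = λ·b` and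
`𝓜 •₁,₃,₄(b,b,c) = λ·c`. -/
theorem stmt8 (I J K : ℕ) (hI : 0 < I) (hJ : 0 < J) (hK : 0 < K)
    (T : Fin I → Fin J → Fin K → ℝ)
    (b : Fin J → ℝ) (c : Fin K → ℝ)
    (hb : ∑ j, (b j) ^ 2 = 1) (hc : ∑ k, (c k) ^ 2 = 1)
    (hmax : ∀ (b' : Fin J → ℝ) (c' : Fin K → ℝ),
      (∑ j, (b' j) ^ 2 = 1) → (∑ k, (c' k) ^ 2 = 1) → fBC T b' c' ≤ fBC T b c) :
    ∃ lam : ℝ,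
      (∀ α : Fin J, (∑ β, ∑ γ, ∑ δ, M4 T α γ β δ * c β * b γ * c δ) = lam * b α) ∧
      (∀ β : Fin K, (∑ α, ∑ γ, ∑ δ, M4 T α γ β δ * b α * b γ * c δ) = lam * c β) := by
  classical
  -- M4 symmetry
  have hM4 : ∀ (α γ : Fin J) (β δ : Fin K), M4 T α γ β δ = M4 T γ α δ β := by
    intro α γ β δ
    unfold M4
    exact Finset.sum_congr rfl fun i _ => by ring
  -- matrix in b
  set G : Fin J → Fin J → ℝ := fun p q => ∑ β, ∑ δ, M4 T p q β δ * c β * c δ with hGdef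
  have hGsym : ∀ p q, G p q = G q p := by
    intro p q
    simp only [hGdef]
    rw [Finset.sum_comm]
    refine Finset.sum_congr rfl fun β _ => Finset.sum_congr rfl fun δ _ => ?_
    rw [hM4 p q δ β]
    ring
  have hGquad : ∀ x : Fin J → ℝ, ∑ p, ∑ q, G p q * x p * x q = fBC T x c := by
    intro x
    unfold fBC
    simp only [hGdef, Finset.sum_mul]
    refine Finset.sum_congr rfl fun p _ => ?_
    rw [Finset.sum_comm]
    exact Finset.sum_congr rfl fun β _ => Finset.sum_congr rfl fun q _ =>
      Finset.sum_congr rfl fun δ _ => by ring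
  -- matrix in c
  set H : Fin K → Fin K → ℝ := fun β δ => ∑ p, ∑ q, M4 T p q β δ * b p * b q with hHdef
  have hHsym : ∀ β δ, H β δ = H δ β := by
    intro β δ
    simp only [hHdef]
    rw [Finset.sum_comm]
    refine Finset.sum_congr rfl fun p _ => Finset.sum_congr rfl fun q _ => ?_
    rw [hM4 q p β δ]
    ring
  have hHquad : ∀ y : Fin K → ℝ, ∑ β, ∑ δ, H β δ * y β * y δ = fBC T b y := by
    intro y
    unfold fBC
    simp only [hHdef, Finset.sum_mul]
    -- LHS: ∑β ∑δ ∑p ∑q, RHS: ∑p ∑β ∑q ∑δ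
    rw [show (∑ β, ∑ δ, ∑ p, ∑ q, M4 T p q β δ * b p * b q * y β * y δ)
        = ∑ p, ∑ β, ∑ q, ∑ δ, M4 T p q β δ * b p * b q * y β * y δ from ?_]
    · exact Finset.sum_congr rfl fun p _ => Finset.sum_congr rfl fun β _ =>
        Finset.sum_congr rfl fun q _ => Finset.sum_congr rfl fun δ _ => by ring
    · rw [show (∑ β, ∑ δ, ∑ p, ∑ q, M4 T p q β δ * b p * b q * y β * y δ)
          = ∑ β, ∑ p, ∑ δ, ∑ q, M4 T p q β δ * b p * b q * y β * y δ from
          Finset.sum_congr rfl fun β _ => Finset.sum_comm]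
      rw [Finset.sum_comm]
      exact Finset.sum_congr rfl fun p _ => Finset.sum_congr rfl fun β _ => Finset.sum_comm
  set lam : ℝ := fBC T b c with hlamdef
  refine ⟨lam, ?_, ?_⟩
  · intro α
    have hmaxG : ∀ x : Fin J → ℝ, (∑ j, x j ^ 2 = 1) →
        ∑ p, ∑ q, G p q * x p * x q ≤ ∑ p, ∑ q, G p q * b p * b q := by
      intro x hx
      rw [hGquad x, hGquad b]
      exact hmax x c hx hc
    have h := quad_max G hGsym b hb hmaxG α
    rw [hGquad b] at h
    rw [show (∑ β, ∑ γ, ∑ δ, M4 T α γ β δ * c β * b γ * c δ)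
        = ∑ q, G α q * b q from ?_]
    · exact h
    · simp only [hGdef, Finset.sum_mul]
      rw [Finset.sum_comm]
      exact Finset.sum_congr rfl fun q _ => Finset.sum_congr rfl fun β _ =>
        Finset.sum_congr rfl fun δ _ => by ring
  · intro β
    have hmaxH : ∀ y : Fin K → ℝ, (∑ k, y k ^ 2 = 1) →
        ∑ p, ∑ q, H p q * y p * y q ≤ ∑ p, ∑ q, H p q * c p * c q := by
      intro y hy
      rw [hHquad y, hHquad c]
      exact hmax b y hb hy
    have h := quad_max H hHsym c hc hmaxH β
    rw [hHquad c] at h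
    rw [show (∑ α, ∑ γ, ∑ δ, M4 T α γ β δ * b α * b γ * c δ)
        = ∑ δ, H β δ * c δ from ?_]
    · exact h
    · simp only [hHdef, Finset.sum_mul]
      calc ∑ α, ∑ γ, ∑ δ, M4 T α γ β δ * b α * b γ * c δ
          = ∑ α, ∑ δ, ∑ γ, M4 T α γ β δ * b α * b γ * c δ :=
            Finset.sum_congr rfl fun α _ => Finset.sum_comm
        _ = ∑ δ, ∑ α, ∑ γ, M4 T α γ β δ * b α * b γ * c δ := Finset.sum_comm
        _ = ∑ δ, ∑ p, ∑ q, M4 T p q β δ * b p * b q * c δ := rfl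
end

section
/- Suppose unit vectors a₀ ∈ ℝ^I, b₀ ∈ ℝ^J, c₀ ∈ ℝ^K and a number μ > 0 satisfy μ·a₀ = T•₂,₃(b₀,c₀), μ·b₀ = T•₁,₃(a₀,c₀), and μ·c₀ = T•₁,₂(a₀,b₀). Define the rank-one ALS iteration by a_{k+1} = T•₂,₃(b_k,c_k)/(‖b_k‖²‖c_k‖²), b_{k+1} = T•₁,₃(a_{k+1},c_k)/(‖a_{k+1}‖²‖c_k‖²), c_{k+1} = T•₁,₂(a_{k+1},b_{k+1})/(‖a_{k+1}‖²‖b_{k+1}‖²). Then the iteration is well defined and remains constant from the first step on: (a_{k+1}, b_{k+1}, c_{k+1}) = (a_k, b_k, c_k) for all k ≥ 1; explicitly, a_k = μ·a₀, b_k = b₀, c_k = c₀ for all k ≥ 1. -/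
open Finset

/-- Squared Euclidean norm. -/
noncomputable def nsq {n : ℕ} (x : Fin n → ℝ) : ℝ := ∑ i, (x i) ^ 2

/-- `(T •₂,₃ (b,c))ᵢ = ∑_{j,k} T_{ijk} bⱼ cₖ`. -/
noncomputable def T23 {I J K : ℕ} (T : Fin I → Fin J → Fin K → ℝ)
    (b : Fin J → ℝ) (c : Fin K → ℝ) : Fin I → ℝ :=
  fun i => ∑ j, ∑ k, T i j k * b j * c k

/-- `(T •₁,₃ (a,c))ⱼ = ∑_{i,k} T_{ijk} aᵢ cₖ`. -/
noncomputable def T13 {I J K : ℕ} (T : Fin I → Fin J → Fin K → ℝ)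
    (a : Fin I → ℝ) (c : Fin K → ℝ) : Fin J → ℝ :=
  fun j => ∑ i, ∑ k, T i j k * a i * c k

/-- `(T •₁,₂ (a,b))ₖ = ∑_{i,j} T_{ijk} aᵢ bⱼ`. -/
noncomputable def T12 {I J K : ℕ} (T : Fin I → Fin J → Fin K → ℝ)
    (a : Fin I → ℝ) (b : Fin J → ℝ) : Fin K → ℝ :=
  fun k => ∑ i, ∑ j, T i j k * a i * b j

/-- If unit vectors `a₀,b₀,c₀` and `μ > 0` form a critical point of the rank-one problem,
then the rank-one ALS iteration started there remains constant from the first step on: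
`a_k = μ·a₀`, `b_k = b₀`, `c_k = c₀` for all `k ≥ 1`. -/
theorem stmt10 (I J K : ℕ) (hI : 0 < I) (hJ : 0 < J) (hK : 0 < K)
    (T : Fin I → Fin J → Fin K → ℝ)
    (a0 : Fin I → ℝ) (b0 : Fin J → ℝ) (c0 : Fin K → ℝ) (μ : ℝ) (hμ : 0 < μ)
    (ha0 : nsq a0 = 1) (hb0 : nsq b0 = 1) (hc0 : nsq c0 = 1)
    (hcrit1 : ∀ i, T23 T b0 c0 i = μ * a0 i)
    (hcrit2 : ∀ j, T13 T a0 c0 j = μ * b0 j)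
    (hcrit3 : ∀ k, T12 T a0 b0 k = μ * c0 k)
    (a : ℕ → Fin I → ℝ) (b : ℕ → Fin J → ℝ) (c : ℕ → Fin K → ℝ)
    (hA0 : a 0 = a0) (hB0 : b 0 = b0) (hC0 : c 0 = c0)
    (hrecA : ∀ k, a (k + 1) = fun i => T23 T (b k) (c k) i / (nsq (b k) * nsq (c k)))
    (hrecB : ∀ k, b (k + 1) = fun j => T13 T (a (k + 1)) (c k) j / (nsq (a (k + 1)) * nsq (c k)))
    (hrecC : ∀ k, c (k + 1) = fun l => T12 T (a (k + 1)) (b (k + 1)) l /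
      (nsq (a (k + 1)) * nsq (b (k + 1)))) :
    ∀ k, 1 ≤ k → a k = μ • a0 ∧ b k = b0 ∧ c k = c0 := by
  have hμ0 : (μ:ℝ) ≠ 0 := ne_of_gt hμ
  have step : ∀ k, b k = b0 → c k = c0 →
      a (k+1) = μ • a0 ∧ b (k+1) = b0 ∧ c (k+1) = c0 := by
    intro k hb hc
    have hA1 : a (k+1) = μ • a0 := by
      rw [hrecA, hb, hc, hb0, hc0]
      funext i
      simp [hcrit1 i]
    have hnsq : nsq (μ • a0) = μ^2 := by
      unfold nsq at ha0 ⊢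
      calc ∑ i, ((μ • a0) i)^2 = μ^2 * ∑ i, (a0 i)^2 := by
            rw [Finset.mul_sum]
            apply Finset.sum_congr rfl
            intro i _
            simp [smul_eq_mul]; ring
        _ = μ^2 := by rw [ha0, mul_one]
    have hB1 : b (k+1) = b0 := by
      rw [hrecB k, hA1, hc, hnsq, hc0]
      funext j
      have h13 : T13 T (μ • a0) c0 j = μ * (μ * b0 j) := by
        rw [← hcrit2 j]
        simp only [T13, Finset.mul_sum, smul_eq_mul]
        apply Finset.sum_congr rfl; intro i _
        apply Finset.sum_congr rfl; intro l _
        simp only [Pi.smul_apply, smul_eq_mul]; ring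
      rw [h13]
      field_simp
    have hC1 : c (k+1) = c0 := by
      rw [hrecC k, hA1, hB1, hnsq, hb0]
      funext l
      have h12 : T12 T (μ • a0) b0 l = μ * (μ * c0 l) := by
        rw [← hcrit3 l]
        simp only [T12, Finset.mul_sum, smul_eq_mul]
        apply Finset.sum_congr rfl; intro i _
        apply Finset.sum_congr rfl; intro j _
        simp only [Pi.smul_apply, smul_eq_mul]; ring
      rw [h12]
      field_simp
    exact ⟨hA1, hB1, hC1⟩
  intro k hk
  induction k with
  | zero => omega
  | succ n ih =>
    rcases Nat.eq_zero_or_pos n with h0 | hp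
    · subst h0
      exact step 0 hB0 hC0
    · obtain ⟨_, hb, hc⟩ := ih hp
      exact step n hb hc
end

section
/- For any B ∈ ℝ^{J×R}, C ∈ ℝ^{K×R}, let R̄ = rank(B⊙C) and let u_1,…,u_{R̄} be an orthonormal basis of the column space of B⊙C. Then 𝔍_red(B,C) = (1/2)·Σ_{i=1}^{JK} λ_i·(1 − Σ_{r=1}^{R̄} ⟨v̄_i, u_r⟩²). -/
open Finset

section Helpers

variable {ι : Type*} [Fintype ι] {n : ℕ}

private lemma proj_mem (u : Fin n → ι → ℝ) (t : ι → ℝ) :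
    (fun p => ∑ r, (∑ q, t q * u r q) * u r p) ∈ Submodule.span ℝ (Set.range u) := by
  have h : (fun p => ∑ r, (∑ q, t q * u r q) * u r p)
      = ∑ r, (∑ q, t q * u r q) • u r := by
    funext p; simp [Finset.sum_apply]
  rw [h]
  exact Submodule.sum_mem _ fun r _ => Submodule.smul_mem _ _ (Submodule.subset_span ⟨r, rfl⟩)

private lemma resid_orth {u : Fin n → ι → ℝ}
    (hu : ∀ r s, (∑ p, u r p * u s p) = if r = s then 1 else 0) (t : ι → ℝ) {x : ι → ℝ}
    (hx : x ∈ Submodule.span ℝ (Set.range u)) :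
    ∑ p, (t p - ∑ r, (∑ q, t q * u r q) * u r p) * x p = 0 := by
  induction hx using Submodule.span_induction with
  | mem x hx =>
      obtain ⟨s, rfl⟩ := hx
      have h1 : ∀ p, (t p - ∑ r, (∑ q, t q * u r q) * u r p) * u s p
          = t p * u s p - ∑ r, (∑ q, t q * u r q) * (u r p * u s p) := by
        intro p
        rw [sub_mul, Finset.sum_mul]
        congr 1
        exact Finset.sum_congr rfl fun r _ => by ring
      simp_rw [h1]
      rw [Finset.sum_sub_distrib, Finset.sum_comm]
      have h2 : ∀ r, ∑ p, (∑ q, t q * u r q) * (u r p * u s p)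
          = (∑ q, t q * u r q) * (∑ p, u r p * u s p) := fun r => by rw [Finset.mul_sum]
      simp_rw [h2, hu]
      simp only [mul_ite, mul_one, mul_zero, Finset.sum_ite_eq', Finset.mem_univ, if_true]
      exact sub_self _
  | zero => simp
  | add x y _ _ hx hy =>
      simp only [Pi.add_apply, mul_add, Finset.sum_add_distrib, hx, hy, add_zero]
  | smul a x _ hx =>
      simp only [Pi.smul_apply, smul_eq_mul]
      have : ∀ p, (t p - ∑ r, (∑ q, t q * u r q) * u r p) * (a * x p)
          = a * ((t p - ∑ r, (∑ q, t q * u r q) * u r p) * x p) := fun p => by ring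
      simp_rw [this, ← Finset.mul_sum, hx, mul_zero]

private lemma resid_norm {u : Fin n → ι → ℝ}
    (hu : ∀ r s, (∑ p, u r p * u s p) = if r = s then 1 else 0) (t : ι → ℝ) :
    ∑ p, (t p - ∑ r, (∑ q, t q * u r q) * u r p) ^ 2
      = ∑ p, t p ^ 2 - ∑ r, (∑ q, t q * u r q) ^ 2 := by
  have h0 : ∑ p, (t p - ∑ r, (∑ q, t q * u r q) * u r p)
      * (∑ r, (∑ q, t q * u r q) * u r p) = 0 :=
    resid_orth hu t (proj_mem u t)
  have h1 : ∑ p, t p * (∑ r, (∑ q, t q * u r q) * u r p)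
      = ∑ r, (∑ q, t q * u r q) ^ 2 := by
    have ha : ∀ p, t p * (∑ r, (∑ q, t q * u r q) * u r p)
        = ∑ r, (∑ q, t q * u r q) * (t p * u r p) := by
      intro p
      rw [Finset.mul_sum]
      exact Finset.sum_congr rfl fun r _ => by ring
    simp_rw [ha]
    rw [Finset.sum_comm]
    refine Finset.sum_congr rfl fun r _ => ?_
    rw [← Finset.mul_sum, sq]
  have expand : ∀ p, (t p - ∑ r, (∑ q, t q * u r q) * u r p) ^ 2
      = t p ^ 2 - t p * (∑ r, (∑ q, t q * u r q) * u r p)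
        - (t p - ∑ r, (∑ q, t q * u r q) * u r p) * (∑ r, (∑ q, t q * u r q) * u r p) :=
    fun p => by ring
  simp_rw [expand]
  rw [Finset.sum_sub_distrib, Finset.sum_sub_distrib, h0, h1, sub_zero]

private lemma pyth (e d : ι → ℝ) (h : ∑ p, e p * d p = 0) :
    ∑ p, e p ^ 2 ≤ ∑ p, (e p + d p) ^ 2 := by
  have key : ∑ p, (e p + d p) ^ 2 = ∑ p, e p ^ 2 + (2 * ∑ p, e p * d p + ∑ p, d p ^ 2) := by
    rw [Finset.mul_sum, ← Finset.sum_add_distrib, ← Finset.sum_add_distrib]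
    exact Finset.sum_congr rfl fun p _ => by ring
  rw [key, h]
  have hd : 0 ≤ ∑ p, d p ^ 2 := Finset.sum_nonneg fun p _ => sq_nonneg _
  linarith

private lemma dot_sq_expand {m : ℕ} (t : Fin m → ι → ℝ) (x : ι → ℝ) :
    ∑ i, (∑ p, t i p * x p) ^ 2 = ∑ p, ∑ q, (∑ i, t i p * t i q) * (x p * x q) := by
  have h1 : ∀ i, (∑ p, t i p * x p) ^ 2 = ∑ p, ∑ q, t i p * t i q * (x p * x q) := by
    intro i
    rw [sq, Finset.sum_mul_sum]
    exact Finset.sum_congr rfl fun p _ => Finset.sum_congr rfl fun q _ => by ring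
  simp_rw [h1]
  rw [Finset.sum_comm]
  refine Finset.sum_congr rfl fun p _ => ?_
  rw [Finset.sum_comm]
  refine Finset.sum_congr rfl fun q _ => ?_
  rw [Finset.sum_mul]

private lemma spec_expand {m : ℕ} (lam : Fin m → ℝ) (v : Fin m → ι → ℝ) (x : ι → ℝ) :
    ∑ j, lam j * (∑ p, v j p * x p) ^ 2
      = ∑ p, ∑ q, (∑ j, lam j * v j p * v j q) * (x p * x q) := by
  have h1 : ∀ j, lam j * (∑ p, v j p * x p) ^ 2
      = ∑ p, ∑ q, lam j * v j p * v j q * (x p * x q) := by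
    intro j
    rw [sq, Finset.sum_mul_sum]
    simp_rw [Finset.mul_sum]
    exact Finset.sum_congr rfl fun p _ => Finset.sum_congr rfl fun q _ => by ring
  simp_rw [h1]
  rw [Finset.sum_comm]
  refine Finset.sum_congr rfl fun p _ => ?_
  rw [Finset.sum_comm]
  refine Finset.sum_congr rfl fun q _ => ?_
  rw [Finset.sum_mul]

end Helpers

private theorem stmt11_aux (I J K R : ℕ) (hI : 0 < I) (hJ : 0 < J) (hK : 0 < K) (hR : 0 < R)
    (T : Fin I → Fin J → Fin K → ℝ)
    (lam : Fin (J * K) → ℝ) (v : Fin (J * K) → (Fin J × Fin K) → ℝ)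
    (hvorth : ∀ i i', (∑ p, v i p * v i' p) = if i = i' then 1 else 0)
    (hlam : ∀ i, 0 ≤ lam i)
    (hM : ∀ p q, (∑ i, T i p.1 p.2 * T i q.1 q.2) = ∑ i, lam i * v i p * v i q)
    (B : Matrix (Fin J) (Fin R) ℝ) (C : Matrix (Fin K) (Fin R) ℝ)
    (W : Matrix (Fin J × Fin K) (Fin R) ℝ) (hW : ∀ p r, W p r = B p.1 r * C p.2 r)
    (n : ℕ)
    (u : Fin n → (Fin J × Fin K) → ℝ)
    (huo : ∀ r s, (∑ p, u r p * u s p) = if r = s then 1 else 0)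
    (husp : Submodule.span ℝ (Set.range u) = LinearMap.range (Matrix.mulVecLin W)) :
    (⨅ A : Matrix (Fin I) (Fin R) ℝ,
        (1 / 2 : ℝ) * ∑ i, ∑ j, ∑ k, (T i j k - ∑ r, A i r * B j r * C k r) ^ 2)
      = (1 / 2) * ∑ i, lam i * (1 - ∑ r, (∑ p, v i p * u r p) ^ 2) := by
  classical
  set t : Fin I → (Fin J × Fin K) → ℝ := fun i p => T i p.1 p.2 with ht
  set cst : ℝ := (1 / 2) * ∑ i, (∑ p, t i p ^ 2 - ∑ r, (∑ q, t i q * u r q) ^ 2) with hcst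
  have hJfun : ∀ A : Matrix (Fin I) (Fin R) ℝ,
      (1 / 2 : ℝ) * ∑ i, ∑ j, ∑ k, (T i j k - ∑ r, A i r * B j r * C k r) ^ 2
        = (1 / 2) * ∑ i, ∑ p : Fin J × Fin K, (t i p - W.mulVec (A i) p) ^ 2 := by
    intro A
    congr 1
    refine Finset.sum_congr rfl fun i _ => ?_
    have key : ∀ p : Fin J × Fin K,
        (t i p - W.mulVec (A i) p) = T i p.1 p.2 - ∑ r, A i r * B p.1 r * C p.2 r := by
      intro p
      have : W.mulVec (A i) p = ∑ r, A i r * B p.1 r * C p.2 r := by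
        simp only [Matrix.mulVec, dotProduct, hW]
        exact Finset.sum_congr rfl fun r _ => by ring
      rw [this]
    calc ∑ j, ∑ k, (T i j k - ∑ r, A i r * B j r * C k r) ^ 2
        = ∑ p : Fin J × Fin K, (T i p.1 p.2 - ∑ r, A i r * B p.1 r * C p.2 r) ^ 2 :=
          (Fintype.sum_prod_type
            (f := fun p : Fin J × Fin K =>
              (T i p.1 p.2 - ∑ r, A i r * B p.1 r * C p.2 r) ^ 2)).symm
      _ = ∑ p : Fin J × Fin K, (t i p - W.mulVec (A i) p) ^ 2 := by simp_rw [key]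
  have hmem : ∀ a : Fin R → ℝ, W.mulVec a ∈ Submodule.span ℝ (Set.range u) := by
    intro a
    rw [husp]
    exact ⟨a, by simp [Matrix.mulVecLin_apply]⟩
  have hlb : ∀ A : Matrix (Fin I) (Fin R) ℝ,
      cst ≤ (1 / 2 : ℝ) * ∑ i, ∑ j, ∑ k, (T i j k - ∑ r, A i r * B j r * C k r) ^ 2 := by
    intro A
    rw [hJfun A, hcst]
    have h2 : (0 : ℝ) ≤ 1 / 2 := by norm_num
    refine mul_le_mul_of_nonneg_left (Finset.sum_le_sum fun i _ => ?_) h2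
    rw [← resid_norm huo (t i)]
    have h0 : ∑ p, (t i p - ∑ r, (∑ q, t i q * u r q) * u r p)
        * ((∑ r, (∑ q, t i q * u r q) * u r p) - W.mulVec (A i) p) = 0 :=
      resid_orth huo (t i)
        (Submodule.sub_mem _ (proj_mem u (t i)) (hmem (A i)))
    have hp := pyth (fun p => t i p - ∑ r, (∑ q, t i q * u r q) * u r p)
      (fun p => (∑ r, (∑ q, t i q * u r q) * u r p) - W.mulVec (A i) p) h0
    calc ∑ p, (t i p - ∑ r, (∑ q, t i q * u r q) * u r p) ^ 2
        ≤ ∑ p, ((t i p - ∑ r, (∑ q, t i q * u r q) * u r p)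
            + ((∑ r, (∑ q, t i q * u r q) * u r p) - W.mulVec (A i) p)) ^ 2 := hp
      _ = ∑ p, (t i p - W.mulVec (A i) p) ^ 2 :=
          Finset.sum_congr rfl fun p _ => by ring
  have hex : ∀ i, ∃ a : Fin R → ℝ,
      W.mulVec a = fun p => ∑ r, (∑ q, t i q * u r q) * u r p := by
    intro i
    have hm := proj_mem u (t i)
    rw [husp] at hm
    obtain ⟨a, ha⟩ := hm
    exact ⟨a, by rw [← Matrix.mulVecLin_apply]; exact ha⟩
  choose A0 hA0 using hex
  have hub : (1 / 2 : ℝ) * ∑ i, ∑ j, ∑ k, (T i j k - ∑ r, A0 i r * B j r * C k r) ^ 2 = cst := by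
    rw [hJfun A0, hcst]
    congr 1
    refine Finset.sum_congr rfl fun i _ => ?_
    simp only [hA0]
    exact resid_norm huo (t i)
  have hJred : (⨅ A : Matrix (Fin I) (Fin R) ℝ,
      (1 / 2 : ℝ) * ∑ i, ∑ j, ∑ k, (T i j k - ∑ r, A i r * B j r * C k r) ^ 2) = cst := by
    refine le_antisymm ?_ (le_ciInf hlb)
    have hbdd : BddBelow (Set.range fun A : Matrix (Fin I) (Fin R) ℝ =>
        (1 / 2 : ℝ) * ∑ i, ∑ j, ∑ k, (T i j k - ∑ r, A i r * B j r * C k r) ^ 2) :=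
      ⟨cst, by rintro x ⟨A, rfl⟩; exact hlb A⟩
    exact le_of_le_of_eq (ciInf_le hbdd A0) hub
  rw [hJred, hcst]
  congr 1
  have e1 : ∑ i, ∑ p, t i p ^ 2 = ∑ j, lam j := by
    rw [Finset.sum_comm]
    calc ∑ p : Fin J × Fin K, ∑ i, t i p ^ 2
        = ∑ p : Fin J × Fin K, ∑ j, lam j * v j p * v j p := by
          refine Finset.sum_congr rfl fun p _ => ?_
          rw [← hM p p]
          exact Finset.sum_congr rfl fun i _ => sq (t i p)
      _ = ∑ j, lam j * ∑ p, v j p * v j p := by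
          rw [Finset.sum_comm]
          refine Finset.sum_congr rfl fun j _ => ?_
          rw [Finset.mul_sum]
          exact Finset.sum_congr rfl fun p _ => by ring
      _ = ∑ j, lam j := by simp_rw [hvorth]; simp
  have e2 : ∑ i, ∑ r, (∑ q, t i q * u r q) ^ 2
      = ∑ r, ∑ j, lam j * (∑ p, v j p * u r p) ^ 2 := by
    rw [Finset.sum_comm]
    refine Finset.sum_congr rfl fun r _ => ?_
    calc ∑ i, (∑ q, t i q * u r q) ^ 2
        = ∑ p, ∑ q, (∑ i, t i p * t i q) * (u r p * u r q) := dot_sq_expand t (u r)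
      _ = ∑ p, ∑ q, (∑ j, lam j * v j p * v j q) * (u r p * u r q) := by
          refine Finset.sum_congr rfl fun p _ => Finset.sum_congr rfl fun q _ => ?_
          rw [hM p q]
      _ = ∑ j, lam j * (∑ p, v j p * u r p) ^ 2 := (spec_expand lam v (u r)).symm
  calc ∑ i, (∑ p, t i p ^ 2 - ∑ r, (∑ q, t i q * u r q) ^ 2)
      = ∑ i, ∑ p, t i p ^ 2 - ∑ i, ∑ r, (∑ q, t i q * u r q) ^ 2 :=
        Finset.sum_sub_distrib _ _
    _ = ∑ j, lam j - ∑ r, ∑ j, lam j * (∑ p, v j p * u r p) ^ 2 := by rw [e1, e2]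
    _ = ∑ j, lam j * (1 - ∑ r, (∑ p, v j p * u r p) ^ 2) := by
        rw [Finset.sum_comm, ← Finset.sum_sub_distrib]
        refine Finset.sum_congr rfl fun j _ => ?_
        rw [mul_sub, mul_one, Finset.mul_sum]

/-- The matrix `M ∈ ℝ^{JK×JK}` with entries `M_{(α,β),(γ,δ)} = ∑ᵢ T_{iαβ} T_{iγδ}`. -/
noncomputable def Mmat {I J K : ℕ} (T : Fin I → Fin J → Fin K → ℝ) :
    Matrix (Fin J × Fin K) (Fin J × Fin K) ℝ :=
  Matrix.of fun p q => ∑ i, T i p.1 p.2 * T i q.1 q.2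

/-- `u` is an orthonormal basis of the column space of `B ⊙ C`. -/
def IsONBasisOfColSpace {J K R : ℕ} (B : Matrix (Fin J) (Fin R) ℝ)
    (C : Matrix (Fin K) (Fin R) ℝ)
    (u : Fin ((khatriRao B C).rank) → (Fin J × Fin K) → ℝ) : Prop :=
  (∀ r s, (∑ p, u r p * u s p) = if r = s then 1 else 0) ∧
  Submodule.span ℝ (Set.range u) = LinearMap.range (Matrix.mulVecLin (khatriRao B C))

/-- Given a spectral decomposition `M = ∑ᵢ λᵢ v̄ᵢ v̄ᵢᵀ` with orthonormal eigenvectors and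
nonnegative eigenvalues, and any orthonormal basis `u` of the column space of `B⊙C`,
`𝔍_red(B,C) = ½ ∑ᵢ λᵢ (1 − ∑_r ⟨v̄ᵢ, u_r⟩²)`. -/
theorem stmt11 (I J K R : ℕ) (hI : 0 < I) (hJ : 0 < J) (hK : 0 < K) (hR : 0 < R)
    (T : Fin I → Fin J → Fin K → ℝ)
    (lam : Fin (J * K) → ℝ) (v : Fin (J * K) → (Fin J × Fin K) → ℝ)
    (hvorth : ∀ i i', (∑ p, v i p * v i' p) = if i = i' then 1 else 0)
    (hlam : ∀ i, 0 ≤ lam i)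
    (hM : ∀ p q, Mmat T p q = ∑ i, lam i * v i p * v i q)
    (B : Matrix (Fin J) (Fin R) ℝ) (C : Matrix (Fin K) (Fin R) ℝ)
    (u : Fin ((khatriRao B C).rank) → (Fin J × Fin K) → ℝ)
    (hu : IsONBasisOfColSpace B C u) :
    Jred T B C = (1 / 2) * ∑ i, lam i * (1 - ∑ r, (∑ p, v i p * u r p) ^ 2) := by
  obtain ⟨huo, husp⟩ := hu
  have hM' : ∀ p q : Fin J × Fin K,
      (∑ i, T i p.1 p.2 * T i q.1 q.2) = ∑ i, lam i * v i p * v i q := fun p q => hM p q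
  have h := stmt11_aux I J K R hI hJ hK hR T lam v hvorth hlam hM' B C (khatriRao B C)
    (fun p r => rfl) ((khatriRao B C).rank) u huo husp
  unfold Jred Jfun
  exact h
end

section
/- For any B ∈ ℝ^{J×R}, C ∈ ℝ^{K×R}, the reduced functional equals a weighted sum of squared distances to the Khatri–Rao range: 𝔍_red(B,C) = (1/2)·Σ_{i=1}^{JK} λ_i · dist_F(V̄_i, KR(B,C))², where dist_F(V̄_i, KR(B,C)) = inf { ‖V̄_i − X‖_F : X ∈ KR(B,C) } is the Frobenius distance from V̄_i to the subspace KR(B,C). -/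
open Finset

/-- Squared Frobenius norm. -/
noncomputable def frobSq {J K : ℕ} (X : Matrix (Fin J) (Fin K) ℝ) : ℝ :=
  ∑ j, ∑ k, (X j k) ^ 2

/-- The Khatri–Rao range `KR(B,C)`: the span in `ℝ^{J×K}` of the outer products
`b_r c_rᵀ` of the columns of `B` and `C`. -/
noncomputable def KRrange {J K R : ℕ} (B : Matrix (Fin J) (Fin R) ℝ)
    (C : Matrix (Fin K) (Fin R) ℝ) : Submodule ℝ (Matrix (Fin J) (Fin K) ℝ) :=
  Submodule.span ℝ (Set.range fun r : Fin R => Matrix.of fun j k => B j r * C k r)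

/- ### Auxiliary machinery -/

open scoped RealInnerProductSpace

noncomputable section Aux

variable {J K R : ℕ}

/-- The Euclidean space `ℝ^{JK}`. -/
abbrev E (J K : ℕ) := EuclideanSpace ℝ (Fin J × Fin K)

/-- Vectorization of matrices. -/
def phi (J K : ℕ) : Matrix (Fin J) (Fin K) ℝ →ₗ[ℝ] E J K where
  toFun X := WithLp.toLp 2 (fun p : Fin J × Fin K => X p.1 p.2)
  map_add' _ _ := rfl
  map_smul' _ _ := rfl

variable (B : Matrix (Fin J) (Fin R) ℝ) (C : Matrix (Fin K) (Fin R) ℝ)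

def wvec (r : Fin R) : E J K := phi J K (Matrix.of fun j k => B j r * C k r)

def Ssub : Submodule ℝ (E J K) := (KRrange B C).map (phi J K)

lemma Ssub_eq : Ssub B C = Submodule.span ℝ (Set.range (wvec B C)) := by
  rw [Ssub, KRrange, Submodule.map_span, ← Set.range_comp]
  rfl

lemma frob_norm (Y : Matrix (Fin J) (Fin K) ℝ) :
    Real.sqrt (frobSq Y) = ‖phi J K Y‖ := by
  rw [EuclideanSpace.norm_eq]
  congr 1
  rw [frobSq, Fintype.sum_prod_type]
  simp [phi, Real.norm_eq_abs, sq_abs]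
  rfl

lemma sInf_dist (U : Matrix (Fin J) (Fin K) ℝ) :
    sInf {d : ℝ | ∃ X ∈ KRrange B C, d = Real.sqrt (frobSq (U - X))}
      = ‖phi J K U - (Submodule.orthogonalProjectionOnto (Ssub B C) (phi J K U) : E J K)‖ := by
  have hset : {d : ℝ | ∃ X ∈ KRrange B C, d = Real.sqrt (frobSq (U - X))}
      = Set.range (fun y : Ssub B C => ‖phi J K U - (y : E J K)‖) := by
    ext d
    constructor
    · rintro ⟨X, hX, rfl⟩
      exact ⟨⟨phi J K X, Submodule.mem_map_of_mem hX⟩, by rw [frob_norm, map_sub]⟩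
    · rintro ⟨⟨y, hy⟩, rfl⟩
      obtain ⟨X, hX, rfl⟩ := hy
      exact ⟨X, hX, by rw [frob_norm, map_sub]⟩
  rw [hset]
  exact (Submodule.starProjection_minimal _).symm

lemma sum_apply'' {ι : Type*} (s : Finset ι) (f : ι → E J K) (p : Fin J × Fin K) :
    (∑ r ∈ s, f r) p = ∑ r ∈ s, f r p :=
  by rw [WithLp.ofLp_sum]; exact Finset.sum_apply p s _

lemma normSq_eq' (x : E J K) : ‖x‖ ^ 2 = ∑ p, (x p) ^ 2 := by
  rw [EuclideanSpace.norm_eq, Real.sq_sqrt (by positivity)]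
  simp [Real.norm_eq_abs, sq_abs]

variable {I : ℕ} (T : Fin I → Fin J → Fin K → ℝ)

/-- The `i`-th horizontal slice of the tensor, vectorized. -/
def tvec (i : Fin I) : E J K := WithLp.toLp 2 (fun p : Fin J × Fin K => T i p.1 p.2)

lemma Jfun_eq (A : Matrix (Fin I) (Fin R) ℝ) :
    Jfun T A B C = (1/2) * ∑ i, ‖tvec T i - ∑ r, A i r • wvec B C r‖ ^ 2 := by
  unfold Jfun
  congr 1
  refine Finset.sum_congr rfl fun i _ => ?_
  rw [normSq_eq', Fintype.sum_prod_type]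
  refine Finset.sum_congr rfl fun j _ => Finset.sum_congr rfl fun k _ => ?_
  congr 1
  have : (∑ r, A i r • wvec B C r) (j, k) = ∑ r, A i r * (B j r * C k r) := by
    rw [sum_apply'']
    rfl
  have h2 : (tvec T i - ∑ r, A i r • wvec B C r) (j, k)
      = tvec T i (j,k) - (∑ r, A i r • wvec B C r) (j, k) := rfl
  rw [h2, this, tvec]
  congr 1
  exact Finset.sum_congr rfl fun r _ => by ring

lemma wsum_mem (a : Fin R → ℝ) : (∑ r, a r • wvec B C r) ∈ Ssub B C := by
  rw [Ssub_eq]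
  exact Submodule.sum_mem _ fun r _ =>
    Submodule.smul_mem _ _ (Submodule.subset_span (Set.mem_range_self r))

lemma Jred_eq :
    Jred T B C = (1/2) * ∑ i,
      ‖tvec T i - (Submodule.orthogonalProjectionOnto (Ssub B C) (tvec T i) : E J K)‖ ^ 2 := by
  have key : ∀ (u : E J K) (y : E J K), y ∈ Ssub B C →
      ‖u - (Submodule.orthogonalProjectionOnto (Ssub B C) u : E J K)‖ ≤ ‖u - y‖ := by
    intro u y hy
    rw [← Submodule.starProjection_apply, Submodule.starProjection_minimal]
    exact ciInf_le ⟨0, by rintro d ⟨z, rfl⟩; positivity⟩ (⟨y, hy⟩ : Ssub B C)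
  apply le_antisymm
  · -- choose the minimizing `A`
    have hex : ∀ i : Fin I, ∃ a : Fin R → ℝ, (∑ r, a r • wvec B C r)
        = (Submodule.orthogonalProjectionOnto (Ssub B C) (tvec T i) : E J K) := by
      intro i
      have hmem : ((Submodule.orthogonalProjectionOnto (Ssub B C) (tvec T i) : E J K))
          ∈ Submodule.span ℝ (Set.range (wvec B C)) := by
        rw [← Ssub_eq]; exact Submodule.coe_mem _
      exact (Finsupp.mem_span_range_iff_exists_finsupp.mp hmem).elim
        fun c hc => ⟨c, by rwa [Finsupp.sum_fintype] at hc; intro; simp⟩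
    choose a ha using hex
    have : Jfun T (Matrix.of fun i r => a i r) B C = (1/2) * ∑ i,
        ‖tvec T i - (Submodule.orthogonalProjectionOnto (Ssub B C) (tvec T i) : E J K)‖ ^ 2 := by
      rw [Jfun_eq]
      congr 1
      exact Finset.sum_congr rfl fun i _ => by
        rw [show (∑ r, (Matrix.of fun i r => a i r) i r • wvec B C r) = _ from ha i]
    rw [← this]
    exact ciInf_le
      ⟨0, by rintro d ⟨A, rfl⟩; show (0:ℝ) ≤ Jfun T A B C; rw [Jfun_eq]; positivity⟩ _
  · apply le_ciInf
    intro A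
    rw [Jfun_eq]
    have h2 : (0:ℝ) ≤ 1/2 := by norm_num
    apply mul_le_mul_of_nonneg_left _ h2
    apply Finset.sum_le_sum
    intro i _
    apply pow_le_pow_left₀ (norm_nonneg _)
    exact key _ _ (wsum_mem B C (A i))

lemma inner_eq' (x y : E J K) : ⟪x, y⟫ = ∑ p, x p * y p := by
  simp [PiLp.inner_apply, RCLike.inner_apply, mul_comm]

lemma decomp (x : E J K) : x = ∑ p, x p • (EuclideanSpace.single p 1 : E J K) := by
  ext q
  rw [sum_apply'']
  simp [EuclideanSpace.single_apply]

lemma inner_expand (L : E J K →ₗ[ℝ] E J K) (x y : E J K) :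
    ⟪x, L y⟫ = ∑ p, ∑ q, x p * y q *
      ⟪(EuclideanSpace.single p 1 : E J K), L (EuclideanSpace.single q 1)⟫ := by
  conv_lhs => rw [decomp x, decomp y]
  rw [map_sum, sum_inner]
  refine Finset.sum_congr rfl fun p _ => ?_
  rw [inner_sum]
  refine Finset.sum_congr rfl fun q _ => ?_
  rw [map_smul, real_inner_smul_left, real_inner_smul_right]
  ring

/-- The orthogonal complement projection `Q = id - P` as a linear map. -/
def Qmap : E J K →ₗ[ℝ] E J K :=
  LinearMap.id - ((Ssub B C).subtype ∘ₗ (Submodule.orthogonalProjectionOnto (Ssub B C)).toLinearMap)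

lemma Qmap_apply (u : E J K) :
    Qmap B C u = u - (Submodule.orthogonalProjectionOnto (Ssub B C) u : E J K) := rfl

lemma normQ (u : E J K) :
    ‖u - (Submodule.orthogonalProjectionOnto (Ssub B C) u : E J K)‖ ^ 2 = ⟪u, Qmap B C u⟫ := by
  rw [Qmap_apply]
  set P := (Submodule.orthogonalProjectionOnto (Ssub B C) u : E J K) with hP
  have horth : ⟪P, u - P⟫ = 0 := by
    have h1 : u - P ∈ (Ssub B C)ᗮ := Submodule.sub_starProjection_mem_orthogonal u
    exact (Submodule.mem_orthogonal _ _).mp h1 P (Submodule.coe_mem _)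
  have : ⟪u, u - P⟫ = ⟪(u - P) + P, u - P⟫ := by rw [sub_add_cancel]
  rw [this, inner_add_left, horth, add_zero, real_inner_self_eq_norm_sq]

lemma trace_id (lam : Fin (J*K) → ℝ) (v : Fin (J*K) → (Fin J × Fin K) → ℝ)
    (hM : ∀ p q, Mmat T p q = ∑ α, lam α * v α p * v α q) :
    ∑ i, ⟪tvec T i, Qmap B C (tvec T i)⟫
      = ∑ α, lam α * ⟪(WithLp.toLp 2 (v α) : E J K), Qmap B C (WithLp.toLp 2 (v α) : E J K)⟫ := by
  set c : (Fin J × Fin K) → (Fin J × Fin K) → ℝ := fun p q =>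
    ⟪(EuclideanSpace.single p 1 : E J K), Qmap B C (EuclideanSpace.single q 1)⟫ with hc
  calc ∑ i, ⟪tvec T i, Qmap B C (tvec T i)⟫
      = ∑ i, ∑ p, ∑ q, tvec T i p * tvec T i q * c p q :=
        Finset.sum_congr rfl fun i _ => inner_expand _ _ _
    _ = ∑ p, ∑ q, ∑ i, tvec T i p * tvec T i q * c p q := by
        rw [Finset.sum_comm]
        exact Finset.sum_congr rfl fun p _ => Finset.sum_comm
    _ = ∑ p, ∑ q, Mmat T p q * c p q := by
        refine Finset.sum_congr rfl fun p _ => Finset.sum_congr rfl fun q _ => ?_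
        rw [← Finset.sum_mul]
        rfl
    _ = ∑ p, ∑ q, ∑ α, lam α * (v α p * v α q * c p q) := by
        refine Finset.sum_congr rfl fun p _ => Finset.sum_congr rfl fun q _ => ?_
        rw [hM p q, Finset.sum_mul]
        exact Finset.sum_congr rfl fun α _ => by ring
    _ = ∑ α, ∑ p, ∑ q, lam α * (v α p * v α q * c p q) := by
        refine Eq.trans (Finset.sum_congr rfl fun p _ => Finset.sum_comm) ?_
        exact Finset.sum_comm
    _ = ∑ α, lam α * ⟪(WithLp.toLp 2 (v α) : E J K), Qmap B C (WithLp.toLp 2 (v α) : E J K)⟫ := by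
        refine Finset.sum_congr rfl fun α _ => ?_
        rw [inner_expand, Finset.mul_sum]
        exact Finset.sum_congr rfl fun p _ => by rw [Finset.mul_sum]

end Aux

/-- Given a spectral decomposition `M = ∑ᵢ λᵢ v̄ᵢ v̄ᵢᵀ`, the reduced functional equals the
weighted sum of squared Frobenius distances of the matricized eigenvectors `V̄ᵢ` to the
Khatri–Rao range: `𝔍_red(B,C) = ½ ∑ᵢ λᵢ · dist_F(V̄ᵢ, KR(B,C))²`. -/
theorem stmt12 (I J K R : ℕ) (hI : 0 < I) (hJ : 0 < J) (hK : 0 < K) (hR : 0 < R)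
    (T : Fin I → Fin J → Fin K → ℝ)
    (lam : Fin (J * K) → ℝ) (v : Fin (J * K) → (Fin J × Fin K) → ℝ)
    (hvorth : ∀ i i', (∑ p, v i p * v i' p) = if i = i' then 1 else 0)
    (hlam : ∀ i, 0 ≤ lam i)
    (hM : ∀ p q, Mmat T p q = ∑ i, lam i * v i p * v i q)
    (B : Matrix (Fin J) (Fin R) ℝ) (C : Matrix (Fin K) (Fin R) ℝ) :
    Jred T B C = (1 / 2) * ∑ i, lam i *
      (sInf {d : ℝ | ∃ X ∈ KRrange B C,
        d = Real.sqrt (frobSq ((Matrix.of fun j k => v i (j, k)) - X))}) ^ 2 := by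
  have hphi : ∀ α, phi J K (Matrix.of fun j k => v α (j, k)) = (WithLp.toLp 2 (v α) : E J K) :=
    fun α => rfl
  have h1 : ∀ α, sInf {d : ℝ | ∃ X ∈ KRrange B C,
      d = Real.sqrt (frobSq ((Matrix.of fun j k => v α (j, k)) - X))}
      = ‖(WithLp.toLp 2 (v α) : E J K)
          - (Submodule.orthogonalProjectionOnto (Ssub B C) (WithLp.toLp 2 (v α) : E J K) : E J K)‖ := by
    intro α
    rw [sInf_dist B C (Matrix.of fun j k => v α (j, k)), hphi]
  rw [Jred_eq B C T, one_div]
  congr 1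
  calc ∑ i, ‖tvec T i - (Submodule.orthogonalProjectionOnto (Ssub B C) (tvec T i) : E J K)‖ ^ 2
      = ∑ i, ⟪tvec T i, Qmap B C (tvec T i)⟫ :=
        Finset.sum_congr rfl fun i _ => normQ B C _
    _ = ∑ α, lam α * ⟪(WithLp.toLp 2 (v α) : E J K), Qmap B C (WithLp.toLp 2 (v α) : E J K)⟫ :=
        trace_id B C T lam v hM
    _ = ∑ α, lam α * (sInf {d : ℝ | ∃ X ∈ KRrange B C,
          d = Real.sqrt (frobSq ((Matrix.of fun j k => v α (j, k)) - X))}) ^ 2 := by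
        refine Finset.sum_congr rfl fun α _ => ?_
        rw [h1 α, normQ]
end

section
/- The infimum of the reduced functional admits the lower bound inf_{B ∈ ℝ^{J×R}, C ∈ ℝ^{K×R}} 𝔍_red(B,C) ≥ (1/2)·Σ_{i=1}^{JK} λ_i · Σ_{k=R+1}^{min(J,K)} (σ_k^i)², where σ_1^i ≥ σ_2^i ≥ … ≥ σ_{min(J,K)}^i are the singular values of the matricized eigenvector V̄_i ∈ ℝ^{J×K}. In particular, if T admits an exact rank-R CP decomposition (inf 𝔍 = 0), then Σ_{i=1}^{JK} λ_i Σ_{k=R+1}^{min(J,K)} (σ_k^i)² = 0. -/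
open Finset

/- ### Auxiliary lemmas -/

lemma swap3 {α β γ : Type*} [Fintype α] [Fintype β] [Fintype γ] (f : α → β → γ → ℝ) :
    (∑ a, ∑ b, ∑ c, f a b c) = ∑ c, ∑ a, ∑ b, f a b c := by
  have h : ∀ a : α, (∑ b, ∑ c, f a b c) = ∑ c, ∑ b, f a b c := fun a => Finset.sum_comm
  simp only [h]
  exact Finset.sum_comm

lemma dot_comb {d K : ℕ} (u : Fin d → Fin K → ℝ)
    (hu : ∀ s t, (∑ k, u s k * u t k) = if s = t then 1 else 0)
    (a : Fin d → ℝ) (t : Fin d) :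
    (∑ k, (∑ s, a s * u s k) * u t k) = a t := by
  simp only [Finset.sum_mul]
  rw [Finset.sum_comm]
  simp only [mul_assoc, ← Finset.mul_sum, hu]
  simp

lemma resid_dot {d K : ℕ} (u : Fin d → Fin K → ℝ)
    (hu : ∀ s t, (∑ k, u s k * u t k) = if s = t then 1 else 0)
    (x : Fin K → ℝ) (t : Fin d) :
    (∑ k, (x k - ∑ s, (∑ k', u s k' * x k') * u s k) * u t k) = 0 := by
  simp only [sub_mul, Finset.sum_sub_distrib]
  rw [dot_comb u hu (fun s => ∑ k', u s k' * x k') t]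
  simp [mul_comm]

lemma resid_sq {d K : ℕ} (u : Fin d → Fin K → ℝ)
    (hu : ∀ s t, (∑ k, u s k * u t k) = if s = t then 1 else 0)
    (x : Fin K → ℝ) :
    (∑ k, (x k - ∑ s, (∑ k', u s k' * x k') * u s k) ^ 2)
      = (∑ k, x k ^ 2) - ∑ s, (∑ k, u s k * x k) ^ 2 := by
  have h1 : ∀ k, (x k - ∑ s, (∑ k', u s k' * x k') * u s k) ^ 2
      = (x k - ∑ s, (∑ k', u s k' * x k') * u s k) * x k
        - (x k - ∑ s, (∑ k', u s k' * x k') * u s k) * (∑ s, (∑ k', u s k' * x k') * u s k) := by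
    intro k; ring
  simp only [h1, Finset.sum_sub_distrib]
  have h2 : (∑ k, (x k - ∑ s, (∑ k', u s k' * x k') * u s k) * (∑ s, (∑ k', u s k' * x k') * u s k)) = 0 := by
    have : ∀ k, (x k - ∑ s, (∑ k', u s k' * x k') * u s k) * (∑ s, (∑ k', u s k' * x k') * u s k)
        = ∑ s, (∑ k', u s k' * x k') * ((x k - ∑ s, (∑ k', u s k' * x k') * u s k) * u s k) := by
      intro k; rw [Finset.mul_sum]; congr 1; funext s; ring
    simp only [this]
    rw [Finset.sum_comm]
    simp only [← Finset.mul_sum]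
    simp [resid_dot u hu x]
  rw [h2]
  simp only [sub_mul, Finset.sum_sub_distrib, sub_zero]
  congr 1
  · simp [sq]
  · simp only [Finset.sum_mul]
    rw [Finset.sum_comm]
    congr 1; funext s
    rw [sq, Finset.sum_mul_sum]
    rw [Finset.sum_comm]
    apply Finset.sum_congr rfl; intro k _
    apply Finset.sum_congr rfl; intro k' _; ring

lemma bessel {d K : ℕ} (u : Fin d → Fin K → ℝ)
    (hu : ∀ s t, (∑ k, u s k * u t k) = if s = t then 1 else 0)
    (x : Fin K → ℝ) :
    (∑ s, (∑ k, u s k * x k) ^ 2) ≤ ∑ k, x k ^ 2 := by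
  have h := resid_sq u hu x
  have h0 : (0:ℝ) ≤ ∑ k, (x k - ∑ s, (∑ k', u s k' * x k') * u s k) ^ 2 :=
    Finset.sum_nonneg fun k _ => sq_nonneg _
  linarith

lemma proj_bound {d K : ℕ} (u : Fin d → Fin K → ℝ)
    (hu : ∀ s t, (∑ k, u s k * u t k) = if s = t then 1 else 0)
    (x e : Fin K → ℝ) (γ : Fin d → ℝ)
    (hxe : ∀ k, x k - e k = ∑ s, γ s * u s k) :
    (∑ k, x k ^ 2) - (∑ s, (∑ k, u s k * x k) ^ 2) ≤ ∑ k, e k ^ 2 := by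
  set g : Fin K → ℝ := fun k => x k - ∑ s, (∑ k', u s k' * x k') * u s k with hgdef
  have hgg := resid_sq u hu x
  have hgx : (∑ k, g k * x k) = (∑ k, x k ^ 2) - ∑ s, (∑ k, u s k * x k) ^ 2 := by
    simp only [hgdef, sub_mul, Finset.sum_sub_distrib]
    congr 1
    · simp [sq]
    · simp only [Finset.sum_mul]
      rw [Finset.sum_comm]
      apply Finset.sum_congr rfl; intro s _
      rw [sq, Finset.sum_mul_sum]
      rw [Finset.sum_comm]
      apply Finset.sum_congr rfl; intro k _
      apply Finset.sum_congr rfl; intro k' _; ring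
  have hge : (∑ k, g k * e k) = (∑ k, x k ^ 2) - ∑ s, (∑ k, u s k * x k) ^ 2 := by
    have hsplit : ∀ k, g k * e k = g k * x k - g k * (x k - e k) := by intro k; ring
    simp only [hsplit, Finset.sum_sub_distrib, hgx]
    have h0 : (∑ k, g k * (x k - e k)) = 0 := by
      simp only [hxe, Finset.mul_sum]
      rw [Finset.sum_comm]
      have : ∀ s, (∑ k, g k * (γ s * u s k)) = γ s * ∑ k, g k * u s k := by
        intro s; rw [Finset.mul_sum]; congr 1; funext k; ring
      simp only [this]
      simp [hgdef, resid_dot u hu x]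
    rw [h0, sub_zero]
  have hnn : (0:ℝ) ≤ ∑ k, (e k - g k) ^ 2 := Finset.sum_nonneg fun k _ => sq_nonneg _
  have hexp : (∑ k, (e k - g k) ^ 2)
      = (∑ k, e k ^ 2) - 2 * (∑ k, g k * e k) + (∑ k, g k ^ 2) := by
    have : ∀ k, (e k - g k) ^ 2 = e k ^ 2 - 2 * (g k * e k) + g k ^ 2 := by intro k; ring
    simp [this, Finset.sum_add_distrib, Finset.sum_sub_distrib, Finset.mul_sum]
  rw [hexp, hge, hgg] at hnn
  linarith

lemma elem_bound {n R : ℕ} (σ : Fin n → ℝ) (hmono : Antitone σ) (hnn : ∀ κ, 0 ≤ σ κ)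
    (t : Fin n → ℝ) (ht0 : ∀ κ, 0 ≤ t κ) (ht1 : ∀ κ, t κ ≤ 1) (hts : (∑ κ, t κ) ≤ (R:ℝ)) :
    (∑ κ, σ κ ^ 2 * t κ) ≤ ∑ κ ∈ Finset.univ.filter (fun κ : Fin n => (κ:ℕ) < R), σ κ ^ 2 := by
  by_cases hnR : n ≤ R
  · have hF : Finset.univ.filter (fun κ : Fin n => (κ:ℕ) < R) = Finset.univ := by
      ext κ; simp [lt_of_lt_of_le κ.isLt hnR]
    rw [hF]
    apply Finset.sum_le_sum
    intro κ _
    nlinarith [sq_nonneg (σ κ), hnn κ, ht0 κ, ht1 κ]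
  · push_neg at hnR
    set ρ : Fin n := ⟨R, hnR⟩ with hρ
    have hsplit := Finset.sum_filter_add_sum_filter_not Finset.univ
      (fun κ : Fin n => (κ:ℕ) < R) (fun κ => σ κ ^ 2 * t κ)
    have htsplit := Finset.sum_filter_add_sum_filter_not Finset.univ
      (fun κ : Fin n => (κ:ℕ) < R) t
    set F := Finset.univ.filter (fun κ : Fin n => (κ:ℕ) < R) with hF
    set G := Finset.univ.filter (fun κ : Fin n => ¬ (κ:ℕ) < R) with hG
    have hcard : F.card = R := by
      have hFI : F = Finset.Iio ρ := by
        ext κ; simp [hF, Fin.lt_def, hρ]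
      rw [hFI, Fin.card_Iio]
    have hGbound : (∑ κ ∈ G, σ κ ^ 2 * t κ) ≤ σ ρ ^ 2 * ∑ κ ∈ G, t κ := by
      rw [Finset.mul_sum]
      apply Finset.sum_le_sum
      intro κ hκ
      have hκR : R ≤ (κ:ℕ) := by
        simp only [hG, Finset.mem_filter] at hκ; omega
      have h1 : σ κ ≤ σ ρ := hmono (by exact hκR)
      have hsq : σ κ ^ 2 ≤ σ ρ ^ 2 := by nlinarith [hnn κ]
      exact mul_le_mul_of_nonneg_right hsq (ht0 κ)
    have hGt : (∑ κ ∈ G, t κ) ≤ (R:ℝ) - ∑ κ ∈ F, t κ := by linarith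
    have hone : (∑ _κ ∈ F, (1:ℝ)) = (R:ℝ) := by simp [hcard]
    have hFb : σ ρ ^ 2 * ((R:ℝ) - ∑ κ ∈ F, t κ) = ∑ κ ∈ F, σ ρ ^ 2 * (1 - t κ) := by
      rw [← Finset.mul_sum, Finset.sum_sub_distrib, hone]
    have hFle : (∑ κ ∈ F, σ ρ ^ 2 * (1 - t κ)) ≤ ∑ κ ∈ F, σ κ ^ 2 * (1 - t κ) := by
      apply Finset.sum_le_sum
      intro κ hκ
      have hκR : (κ:ℕ) < R := by simp only [hF, Finset.mem_filter] at hκ; exact hκ.2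
      have h1 : σ ρ ≤ σ κ := hmono (by exact hκR.le)
      have hsq : σ ρ ^ 2 ≤ σ κ ^ 2 := by nlinarith [hnn ρ]
      exact mul_le_mul_of_nonneg_right hsq (by linarith [ht1 κ])
    have hsum : (∑ κ ∈ F, σ κ ^ 2 * t κ) + (∑ κ ∈ F, σ κ ^ 2 * (1 - t κ)) = ∑ κ ∈ F, σ κ ^ 2 := by
      rw [← Finset.sum_add_distrib]
      apply Finset.sum_congr rfl; intro κ _; ring
    have hmul : σ ρ ^ 2 * (∑ κ ∈ G, t κ) ≤ σ ρ ^ 2 * ((R:ℝ) - ∑ κ ∈ F, t κ) :=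
      mul_le_mul_of_nonneg_left hGt (sq_nonneg _)
    linarith

lemma comb_normsq {n K : ℕ} (z : Fin n → Fin K → ℝ)
    (hz : ∀ κ κ', (∑ k, z κ k * z κ' k) = if κ = κ' then 1 else 0)
    (c : Fin n → ℝ) :
    (∑ k, (∑ κ, c κ * z κ k) ^ 2) = ∑ κ, c κ ^ 2 := by
  have h : ∀ k, (∑ κ, c κ * z κ k) ^ 2
      = ∑ κ, ∑ κ', (c κ * c κ') * (z κ k * z κ' k) := by
    intro k
    rw [sq, Finset.sum_mul_sum]
    apply Finset.sum_congr rfl; intro κ _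
    apply Finset.sum_congr rfl; intro κ' _; ring
  simp only [h]
  rw [Finset.sum_comm]
  apply Finset.sum_congr rfl; intro κ _
  rw [Finset.sum_comm]
  have h2 : ∀ κ', (∑ k, (c κ * c κ') * (z κ k * z κ' k))
      = (c κ * c κ') * ∑ k, z κ k * z κ' k := by
    intro κ'; rw [Finset.mul_sum]
  simp only [h2, hz]
  simp [sq]

lemma exists_onb {K R : ℕ} (C : Matrix (Fin K) (Fin R) ℝ) :
    ∃ (d : ℕ) (u : Fin d → Fin K → ℝ), d ≤ R ∧
      (∀ s t, (∑ k, u s k * u t k) = if s = t then 1 else 0) ∧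
      (∀ r, ∃ γ : Fin d → ℝ, ∀ k, C k r = ∑ s, γ s * u s k) := by
  classical
  set c : Fin R → EuclideanSpace ℝ (Fin K) := fun r => WithLp.toLp 2 (fun k => C k r) with hc
  set V : Submodule ℝ (EuclideanSpace ℝ (Fin K)) := Submodule.span ℝ (Set.range c) with hV
  have hfin : Module.finrank ℝ V ≤ R := by
    have := finrank_range_le_card (R := ℝ) c
    simpa [Set.finrank, hV] using this
  set d := Module.finrank ℝ V with hd
  let b : OrthonormalBasis (Fin d) ℝ V := stdOrthonormalBasis ℝ V
  refine ⟨d, fun s k => (b s : EuclideanSpace ℝ (Fin K)) k, hfin, ?_, ?_⟩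
  · intro s t
    have hon := b.orthonormal
    rw [orthonormal_iff_ite] at hon
    have h := hon s t
    rw [Submodule.coe_inner, PiLp.inner_apply] at h
    simp [RCLike.inner_apply] at h
    rw [← h]
    exact Finset.sum_congr rfl fun x _ => mul_comm _ _
  · intro r
    have hmem : c r ∈ V := Submodule.subset_span (Set.mem_range_self r)
    refine ⟨fun s => b.repr ⟨c r, hmem⟩ s, fun k => ?_⟩
    have hrepr := b.sum_repr ⟨c r, hmem⟩
    have hco : ((∑ s, b.repr ⟨c r, hmem⟩ s • b s : V) : EuclideanSpace ℝ (Fin K)) = c r := by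
      rw [hrepr]
    show c r k = _
    conv_lhs => rw [← hco]
    rw [AddSubmonoidClass.coe_finset_sum]
    have h2 : (∑ s, ((b.repr ⟨c r, hmem⟩ s • b s : V) : EuclideanSpace ℝ (Fin K))) k
        = ∑ s, ((b.repr ⟨c r, hmem⟩ s • b s : V) : EuclideanSpace ℝ (Fin K)) k :=
      by rw [WithLp.ofLp_sum]; exact Finset.sum_apply k Finset.univ _
    rw [h2]
    apply Finset.sum_congr rfl
    intro s _
    simp [smul_eq_mul]

lemma Mquad {I J K : ℕ} (T : Fin I → Fin J → Fin K → ℝ)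
    (lam : Fin (J * K) → ℝ) (v : Fin (J * K) → (Fin J × Fin K) → ℝ)
    (hM : ∀ j k k', (∑ i, T i j k * T i j k') = ∑ m, lam m * v m (j,k) * v m (j,k'))
    (j : Fin J) (a b : Fin K → ℝ) :
    (∑ i, (∑ k, a k * T i j k) * (∑ k, b k * T i j k))
      = ∑ m, lam m * (∑ k, a k * v m (j,k)) * (∑ k, b k * v m (j,k)) := by
  have h : ∀ i, (∑ k, a k * T i j k) * (∑ k, b k * T i j k)
      = ∑ k, ∑ k', (a k * b k') * (T i j k * T i j k') := by
    intro i
    rw [Finset.sum_mul_sum]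
    apply Finset.sum_congr rfl; intro k _
    apply Finset.sum_congr rfl; intro k' _; ring
  simp only [h]
  rw [Finset.sum_comm]
  have h2 : ∀ k, (∑ i, ∑ k', (a k * b k') * (T i j k * T i j k'))
      = ∑ k', (a k * b k') * ∑ i, (T i j k * T i j k') := by
    intro k
    rw [Finset.sum_comm]
    apply Finset.sum_congr rfl; intro k' _
    rw [Finset.mul_sum]
  simp only [h2, hM]
  have h3 : ∀ k k', (a k * b k') * (∑ m, lam m * v m (j,k) * v m (j,k'))
      = ∑ m, (lam m * (a k * v m (j,k))) * (b k' * v m (j,k')) := by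
    intro k k'
    rw [Finset.mul_sum]
    apply Finset.sum_congr rfl; intro m _; ring
  simp only [h3]
  have h4 : ∀ m : Fin (J * K), (lam m * ∑ k, a k * v m (j,k)) * (∑ k, b k * v m (j,k))
      = ∑ k, ∑ k', (lam m * (a k * v m (j,k))) * (b k' * v m (j,k')) := by
    intro m
    rw [mul_assoc, Finset.sum_mul_sum, Finset.mul_sum]
    apply Finset.sum_congr rfl; intro k _
    rw [Finset.mul_sum]
    apply Finset.sum_congr rfl; intro k' _; ring
  simp only [h4]
  have h5 : (∑ k : Fin K, ∑ k' : Fin K, ∑ m, (lam m * (a k * v m (j,k))) * (b k' * v m (j,k')))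
      = ∑ k : Fin K, ∑ m, ∑ k' : Fin K, (lam m * (a k * v m (j,k))) * (b k' * v m (j,k')) :=
    Finset.sum_congr rfl fun k _ => Finset.sum_comm
  rw [h5, Finset.sum_comm]

/-- `σ : Fin (min J K) → ℝ` lists the singular values of `X` in decreasing order:
they are nonnegative, decreasing, and `X` admits a singular value decomposition
`X = ∑ₖ σₖ yₖ zₖᵀ` with orthonormal families `y`, `z`. -/
def IsSingularValues {J K : ℕ} (X : Matrix (Fin J) (Fin K) ℝ)
    (σ : Fin (min J K) → ℝ) : Prop :=
  Antitone σ ∧ (∀ k, 0 ≤ σ k) ∧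
  ∃ (y : Fin (min J K) → Fin J → ℝ) (z : Fin (min J K) → Fin K → ℝ),
    (∀ k l, (∑ j, y k j * y l j) = if k = l then 1 else 0) ∧
    (∀ k l, (∑ j, z k j * z l j) = if k = l then 1 else 0) ∧
    (∀ j k', X j k' = ∑ k, σ k * y k j * z k k')


lemma key_bound {I J K R : ℕ} (T : Fin I → Fin J → Fin K → ℝ)
    (lam : Fin (J * K) → ℝ) (v : Fin (J * K) → (Fin J × Fin K) → ℝ)
    (hvorth : ∀ i i', (∑ p, v i p * v i' p) = if i = i' then 1 else 0)
    (hlam : ∀ i, 0 ≤ lam i)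
    (hMc : ∀ (j : Fin J) (k k' : Fin K),
      (∑ i, T i j k * T i j k') = ∑ m, lam m * v m (j,k) * v m (j,k'))
    (σ : Fin (J * K) → Fin (min J K) → ℝ)
    (hσ : ∀ i, IsSingularValues (Matrix.of fun j k => v i (j, k)) (σ i))
    (A : Matrix (Fin I) (Fin R) ℝ) (B : Matrix (Fin J) (Fin R) ℝ)
    (C : Matrix (Fin K) (Fin R) ℝ) :
    (∑ m, lam m * ∑ κ ∈ Finset.univ.filter (fun κ : Fin (min J K) => R ≤ (κ:ℕ)), σ m κ ^ 2)
      ≤ ∑ i, ∑ j, ∑ k, (T i j k - ∑ r, A i r * B j r * C k r) ^ 2 := by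
  classical
  obtain ⟨d, u, hd, hu, hspan⟩ := exists_onb C
  choose γC hγC using hspan
  -- Step A : rowwise projection bound
  have stepA : ∀ i j, (∑ k, T i j k ^ 2) - (∑ s, (∑ k, u s k * T i j k) ^ 2)
      ≤ ∑ k, (T i j k - ∑ r, A i r * B j r * C k r) ^ 2 := by
    intro i j
    apply proj_bound u hu _ _ (fun s => ∑ r, A i r * B j r * γC r s)
    intro k
    rw [sub_sub_cancel]
    simp only [hγC]
    have h1 : ∀ r, A i r * B j r * (∑ s, γC r s * u s k)
        = ∑ s, (A i r * B j r * γC r s) * u s k := by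
      intro r
      rw [Finset.mul_sum]
      apply Finset.sum_congr rfl; intro s _; ring
    simp only [h1]
    rw [Finset.sum_comm]
    apply Finset.sum_congr rfl; intro s _
    rw [Finset.sum_mul]
  have stepAsum : (∑ i, ∑ j, ∑ k, T i j k ^ 2) - (∑ i, ∑ j, ∑ s, (∑ k, u s k * T i j k) ^ 2)
      ≤ ∑ i, ∑ j, ∑ k, (T i j k - ∑ r, A i r * B j r * C k r) ^ 2 := by
    have h := Finset.sum_le_sum (fun i (_ : i ∈ Finset.univ) =>
      Finset.sum_le_sum (fun j (_ : j ∈ Finset.univ) => stepA i j))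
    simpa [Finset.sum_sub_distrib] using h
  -- Step B1 : total norm
  have hB1 : (∑ i, ∑ j, ∑ k, T i j k ^ 2) = ∑ m, lam m := by
    have h1 : (∑ i, ∑ j, ∑ k, T i j k * T i j k)
        = ∑ j, ∑ k, ∑ i, T i j k * T i j k := by
      rw [Finset.sum_comm]
      apply Finset.sum_congr rfl; intro j _
      exact Finset.sum_comm
    simp only [sq]
    rw [h1]
    simp only [hMc]
    have h2 : (∑ j, ∑ k, ∑ m, lam m * v m (j,k) * v m (j,k))
        = ∑ m, ∑ j, ∑ k, lam m * v m (j,k) * v m (j,k) :=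
      swap3 (fun j k m => lam m * v m (j,k) * v m (j,k))
    rw [h2]
    apply Finset.sum_congr rfl; intro m _
    have h3 : (∑ j, ∑ k, lam m * v m (j,k) * v m (j,k))
        = lam m * ∑ j, ∑ k, v m (j,k) * v m (j,k) := by
      rw [Finset.mul_sum]
      apply Finset.sum_congr rfl; intro j _
      rw [Finset.mul_sum]
      apply Finset.sum_congr rfl; intro k _; ring
    rw [h3]
    have h4 : (∑ j, ∑ k, v m (j,k) * v m (j,k)) = 1 := by
      have := hvorth m m
      rw [Fintype.sum_prod_type] at this
      simpa using this
    rw [h4, mul_one]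
  -- Step B2 : projected mass
  have hB2 : (∑ i, ∑ j, ∑ s, (∑ k, u s k * T i j k) ^ 2)
      = ∑ m, lam m * ∑ s, ∑ j, (∑ k, u s k * v m (j,k)) ^ 2 := by
    simp only [sq]
    have h1 : (∑ i, ∑ j, ∑ s, (∑ k, u s k * T i j k) * (∑ k, u s k * T i j k))
        = ∑ j, ∑ s, ∑ i, (∑ k, u s k * T i j k) * (∑ k, u s k * T i j k) := by
      rw [Finset.sum_comm]
      apply Finset.sum_congr rfl; intro j _
      exact Finset.sum_comm
    rw [h1]
    have h2 : ∀ (j : Fin J) (s : Fin d),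
        (∑ i, (∑ k, u s k * T i j k) * (∑ k, u s k * T i j k))
          = ∑ m, lam m * (∑ k, u s k * v m (j,k)) * (∑ k, u s k * v m (j,k)) :=
      fun j s => Mquad T lam v hMc j (u s) (u s)
    simp only [h2]
    have h3 : (∑ j, ∑ s, ∑ m, lam m * (∑ k, u s k * v m (j,k)) * (∑ k, u s k * v m (j,k)))
        = ∑ m, ∑ j, ∑ s, lam m * (∑ k, u s k * v m (j,k)) * (∑ k, u s k * v m (j,k)) :=
      swap3 _
    rw [h3]
    apply Finset.sum_congr rfl; intro m _
    rw [Finset.mul_sum, Finset.sum_comm]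
    apply Finset.sum_congr rfl; intro s _
    rw [Finset.mul_sum]
    apply Finset.sum_congr rfl; intro j _; ring
  -- Step C : per-eigenvector bound
  have stepC : ∀ m, (∑ κ ∈ Finset.univ.filter (fun κ : Fin (min J K) => R ≤ (κ:ℕ)), σ m κ ^ 2)
      ≤ 1 - ∑ s, ∑ j, (∑ k, u s k * v m (j,k)) ^ 2 := by
    intro m
    obtain ⟨hmono, hnnσ, y, z, hy, hz, hsvd⟩ := hσ m
    have hsvd' : ∀ j k', v m (j, k') = ∑ κ, σ m κ * y κ j * z κ k' := hsvd
    -- ∑ κ, σ m κ ^ 2 = 1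
    have hσ1 : (∑ κ, σ m κ ^ 2) = 1 := by
      have hvn : (∑ j, ∑ k, v m (j,k) * v m (j,k)) = 1 := by
        have := hvorth m m
        rw [Fintype.sum_prod_type] at this
        simpa using this
      have hrow : ∀ j, (∑ k, v m (j,k) * v m (j,k)) = ∑ κ, (σ m κ * y κ j) ^ 2 := by
        intro j
        have := comb_normsq z hz (fun κ => σ m κ * y κ j)
        rw [← this]
        apply Finset.sum_congr rfl; intro k _
        rw [hsvd' j k, sq]
      rw [← hvn]
      simp only [hrow]
      rw [Finset.sum_comm]
      apply Finset.sum_congr rfl; intro κ _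
      have : (∑ j, (σ m κ * y κ j) ^ 2) = σ m κ ^ 2 * ∑ j, y κ j * y κ j := by
        rw [Finset.mul_sum]
        apply Finset.sum_congr rfl; intro j _; ring
      rw [this, hy κ κ]
      simp
    -- q-formula
    set ζ : Fin (min J K) → Fin d → ℝ := fun κ s => ∑ k, z κ k * u s k with hζ
    have hinner : ∀ (j : Fin J) (s : Fin d), (∑ k, u s k * v m (j,k))
        = ∑ κ, (σ m κ * ζ κ s) * y κ j := by
      intro j s
      simp only [hsvd', Finset.mul_sum]
      rw [Finset.sum_comm]
      apply Finset.sum_congr rfl; intro κ _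
      simp only [hζ]
      rw [Finset.mul_sum, Finset.sum_mul]
      apply Finset.sum_congr rfl; intro k _; ring
    have hq : ∀ s, (∑ j, (∑ k, u s k * v m (j,k)) ^ 2) = ∑ κ, σ m κ ^ 2 * ζ κ s ^ 2 := by
      intro s
      simp only [hinner]
      rw [comb_normsq y hy (fun κ => σ m κ * ζ κ s)]
      apply Finset.sum_congr rfl; intro κ _; ring
    set t : Fin (min J K) → ℝ := fun κ => ∑ s, ζ κ s ^ 2 with ht
    have hQt : (∑ s, ∑ j, (∑ k, u s k * v m (j,k)) ^ 2) = ∑ κ, σ m κ ^ 2 * t κ := by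
      simp only [hq]
      rw [Finset.sum_comm]
      apply Finset.sum_congr rfl; intro κ _
      rw [ht, Finset.mul_sum]
    have ht0 : ∀ κ, 0 ≤ t κ := fun κ => Finset.sum_nonneg fun s _ => sq_nonneg _
    have ht1 : ∀ κ, t κ ≤ 1 := by
      intro κ
      have hb := bessel u hu (z κ)
      have hzz : (∑ k, z κ k ^ 2) = 1 := by
        have h := hz κ κ
        simp only [if_pos rfl] at h
        calc (∑ k, z κ k ^ 2) = ∑ k, z κ k * z κ k := by
              apply Finset.sum_congr rfl; intro k _; rw [sq]
          _ = 1 := h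
      have heq : t κ = ∑ s, (∑ k, u s k * z κ k) ^ 2 := by
        apply Finset.sum_congr rfl; intro s _
        congr 1
        apply Finset.sum_congr rfl; intro k _; ring
      rw [heq]
      rw [hzz] at hb
      exact hb
    have hts : (∑ κ, t κ) ≤ (R:ℝ) := by
      have h1 : (∑ κ, t κ) = ∑ s, ∑ κ, ζ κ s ^ 2 := Finset.sum_comm
      have h2 : ∀ s, (∑ κ, ζ κ s ^ 2) ≤ 1 := by
        intro s
        have hb := bessel z hz (u s)
        have huu : (∑ k, u s k ^ 2) = 1 := by
          have h := hu s s
          simp only [if_pos rfl] at h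
          calc (∑ k, u s k ^ 2) = ∑ k, u s k * u s k := by
                apply Finset.sum_congr rfl; intro k _; rw [sq]
            _ = 1 := h
        rw [huu] at hb
        exact hb
      have h3 : (∑ s, ∑ κ, ζ κ s ^ 2) ≤ ∑ s : Fin d, (1:ℝ) :=
        Finset.sum_le_sum fun s _ => h2 s
      have h4 : (∑ s : Fin d, (1:ℝ)) = d := by simp
      have h5 : (d:ℝ) ≤ (R:ℝ) := Nat.cast_le.mpr hd
      linarith
    have helem := elem_bound (σ m) hmono hnnσ t ht0 ht1 hts
    have hfsplit := Finset.sum_filter_add_sum_filter_not Finset.univ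
      (fun κ : Fin (min J K) => (κ:ℕ) < R) (fun κ => σ m κ ^ 2)
    have hGeq : Finset.univ.filter (fun κ : Fin (min J K) => ¬ (κ:ℕ) < R)
        = Finset.univ.filter (fun κ : Fin (min J K) => R ≤ (κ:ℕ)) := by
      apply Finset.filter_congr; intro κ _; simp [not_lt]
    rw [hGeq] at hfsplit
    rw [← hQt] at helem
    linarith
  -- assemble
  have hfinal : (∑ m, lam m * ∑ κ ∈ Finset.univ.filter (fun κ : Fin (min J K) => R ≤ (κ:ℕ)), σ m κ ^ 2)
      ≤ (∑ m, lam m) - ∑ m, lam m * ∑ s, ∑ j, (∑ k, u s k * v m (j,k)) ^ 2 := by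
    have h1 : ∀ m : Fin (J * K), lam m * ∑ κ ∈ Finset.univ.filter (fun κ : Fin (min J K) => R ≤ (κ:ℕ)), σ m κ ^ 2
        ≤ lam m * (1 - ∑ s, ∑ j, (∑ k, u s k * v m (j,k)) ^ 2) :=
      fun m => mul_le_mul_of_nonneg_left (stepC m) (hlam m)
    have h2 := Finset.sum_le_sum fun m (_ : m ∈ Finset.univ) => h1 m
    have h3 : (∑ m, lam m * (1 - ∑ s, ∑ j, (∑ k, u s k * v m (j,k)) ^ 2))
        = (∑ m, lam m) - ∑ m, lam m * ∑ s, ∑ j, (∑ k, u s k * v m (j,k)) ^ 2 := by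
      rw [← Finset.sum_sub_distrib]
      apply Finset.sum_congr rfl; intro m _; ring
    linarith
  rw [hB1, hB2] at stepAsum
  linarith
/-- Lower bound: `inf 𝔍_red ≥ ½ ∑ᵢ λᵢ ∑_{k>R} (σₖⁱ)²`, where `σₖⁱ` are the singular
values of the matricized eigenvectors `V̄ᵢ` of `M`; in particular, if `inf 𝔍 = 0`
(exact rank-`R` CP decomposition), the right-hand-side sum vanishes. -/
theorem stmt14 (I J K R : ℕ) (hI : 0 < I) (hJ : 0 < J) (hK : 0 < K) (hR : 0 < R)
    (T : Fin I → Fin J → Fin K → ℝ)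
    (lam : Fin (J * K) → ℝ) (v : Fin (J * K) → (Fin J × Fin K) → ℝ)
    (hvorth : ∀ i i', (∑ p, v i p * v i' p) = if i = i' then 1 else 0)
    (hlam : ∀ i, 0 ≤ lam i)
    (hM : ∀ p q, Mmat T p q = ∑ i, lam i * v i p * v i q)
    (σ : Fin (J * K) → Fin (min J K) → ℝ)
    (hσ : ∀ i, IsSingularValues (Matrix.of fun j k => v i (j, k)) (σ i)) :
    (⨅ p : Matrix (Fin J) (Fin R) ℝ × Matrix (Fin K) (Fin R) ℝ, Jred T p.1 p.2) ≥
      (1 / 2) * ∑ i, lam i *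
        ∑ k ∈ Finset.univ.filter (fun k : Fin (min J K) => R ≤ (k : ℕ)), (σ i k) ^ 2 ∧
    ((⨅ t : Matrix (Fin I) (Fin R) ℝ × Matrix (Fin J) (Fin R) ℝ × Matrix (Fin K) (Fin R) ℝ,
        Jfun T t.1 t.2.1 t.2.2) = 0 →
      (∑ i, lam i *
        ∑ k ∈ Finset.univ.filter (fun k : Fin (min J K) => R ≤ (k : ℕ)), (σ i k) ^ 2) = 0) := by
  classical
  have hMc : ∀ (j : Fin J) (k k' : Fin K),
      (∑ i, T i j k * T i j k') = ∑ m, lam m * v m (j,k) * v m (j,k') :=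
    fun j k k' => hM (j,k) (j,k')
  have hS0 : (0:ℝ) ≤ ∑ i, lam i *
      ∑ k ∈ Finset.univ.filter (fun k : Fin (min J K) => R ≤ (k : ℕ)), (σ i k) ^ 2 :=
    Finset.sum_nonneg fun m _ => mul_nonneg (hlam m)
      (Finset.sum_nonneg fun κ _ => sq_nonneg _)
  have keyJ : ∀ (A : Matrix (Fin I) (Fin R) ℝ) (B : Matrix (Fin J) (Fin R) ℝ)
      (C : Matrix (Fin K) (Fin R) ℝ),
      (1 / 2) * (∑ i, lam i *
        ∑ k ∈ Finset.univ.filter (fun k : Fin (min J K) => R ≤ (k : ℕ)), (σ i k) ^ 2)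
        ≤ Jfun T A B C := by
    intro A B C
    have h := key_bound T lam v hvorth hlam hMc σ hσ A B C
    unfold Jfun
    linarith
  constructor
  · rw [ge_iff_le]
    apply le_ciInf
    intro p
    unfold Jred
    apply le_ciInf
    intro A
    exact keyJ A p.1 p.2
  · intro h0
    have hle : (1 / 2) * (∑ i, lam i *
        ∑ k ∈ Finset.univ.filter (fun k : Fin (min J K) => R ≤ (k : ℕ)), (σ i k) ^ 2)
        ≤ ⨅ t : Matrix (Fin I) (Fin R) ℝ × Matrix (Fin J) (Fin R) ℝ × Matrix (Fin K) (Fin R) ℝ,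
          Jfun T t.1 t.2.1 t.2.2 :=
      le_ciInf fun t => keyJ t.1 t.2.1 t.2.2
    rw [h0] at hle
    linarith
end

section
/- With Λ = Σ_{i=1}^{JK} λ_i > 0 and centroid matrix V̄^C = (Σ_{i=1}^{JK} λ_i V̄_i)/Λ, the dominating functional satisfies inf { (1/2)·Σ_{i=1}^{JK} λ_i ‖V̄_i − X‖_F² : X ∈ ℝ^{J×K}, rank(X) ≤ R } = (1/2)·[ Λ·(1 − ‖V̄^C‖_F²) + Λ·Σ_{k=R+1}^{min(J,K)} σ_k(V̄^C)² ], where σ_1(V̄^C) ≥ σ_2(V̄^C) ≥ … are the singular values of V̄^C; the infimum is attained at the rank-R truncated singular value decomposition of V̄^C, i.e. at X = Σ_{k=1}^R σ_k(V̄^C)·y_k z_kᵀ where y_k, z_k are the top left and right singular vectors of V̄^C. -/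
open Finset

/-- The matricization `V̄ᵢ ∈ ℝ^{J×K}` of the eigenvector `v̄ᵢ ∈ ℝ^{JK}`. -/
noncomputable def Vbar {J K N : ℕ} (v : Fin N → (Fin J × Fin K) → ℝ) (i : Fin N) :
    Matrix (Fin J) (Fin K) ℝ :=
  Matrix.of fun j k => v i (j, k)

/-- The centroid matrix `V̄^C = (∑ᵢ λᵢ V̄ᵢ)/Λ`. -/
noncomputable def centroid {J K N : ℕ} (lam : Fin N → ℝ)
    (v : Fin N → (Fin J × Fin K) → ℝ) : Matrix (Fin J) (Fin K) ℝ :=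
  (∑ i, lam i)⁻¹ • ∑ i, lam i • Vbar v i

/- ### Auxiliary lemmas -/

lemma orth_expand_sq {m n : ℕ} (w : Fin m → Fin n → ℝ)
    (hw : ∀ i i', (∑ j, w i j * w i' j) = if i = i' then 1 else 0)
    (S : Finset (Fin m)) (p : Fin m → ℝ) :
    ∑ j, (∑ i ∈ S, p i * w i j) ^ 2 = ∑ i ∈ S, p i ^ 2 := by
  have h1 : ∀ j : Fin n, (∑ i ∈ S, p i * w i j) ^ 2
      = ∑ i ∈ S, ∑ i' ∈ S, p i * p i' * (w i j * w i' j) := by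
    intro j
    rw [sq, Finset.sum_mul_sum]
    exact Finset.sum_congr rfl fun i _ => Finset.sum_congr rfl fun i' _ => by ring
  calc ∑ j, (∑ i ∈ S, p i * w i j) ^ 2
      = ∑ i ∈ S, ∑ i' ∈ S, p i * p i' * ∑ j, w i j * w i' j := by
        simp only [h1]
        rw [Finset.sum_comm]
        refine Finset.sum_congr rfl fun i _ => ?_
        rw [Finset.sum_comm]
        exact Finset.sum_congr rfl fun i' _ => by rw [Finset.mul_sum]
    _ = ∑ i ∈ S, p i ^ 2 := by
        refine Finset.sum_congr rfl fun i hi => ?_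
        simp only [hw, mul_ite, mul_one, mul_zero]
        rw [Finset.sum_ite_eq S i (fun i' => p i * p i')]
        simp [hi, sq]

lemma bessel_sum {m n : ℕ} (w : Fin m → Fin n → ℝ)
    (hw : ∀ i i', (∑ j, w i j * w i' j) = if i = i' then 1 else 0)
    (u : Fin n → ℝ) :
    ∑ i, (∑ j, w i j * u j) ^ 2 ≤ ∑ j, u j ^ 2 := by
  set p : Fin m → ℝ := fun i => ∑ j, w i j * u j with hp
  have h0 : (0:ℝ) ≤ ∑ j, (u j - ∑ i, p i * w i j) ^ 2 :=
    Finset.sum_nonneg fun _ _ => sq_nonneg _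
  have hcross : ∑ j, u j * (∑ i, p i * w i j) = ∑ i, p i ^ 2 := by
    have h2 : ∀ j, u j * (∑ i, p i * w i j) = ∑ i, p i * (w i j * u j) := by
      intro j; rw [Finset.mul_sum]; exact Finset.sum_congr rfl fun i _ => by ring
    simp only [h2]
    rw [Finset.sum_comm]
    refine Finset.sum_congr rfl fun i _ => ?_
    rw [← Finset.mul_sum]
    have : ∑ j, w i j * u j = p i := rfl
    rw [this, sq]
  have hsq : ∑ j, (∑ i, p i * w i j) ^ 2 = ∑ i, p i ^ 2 := by
    simpa using orth_expand_sq w hw Finset.univ p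
  have hexpand : ∑ j, (u j - ∑ i, p i * w i j) ^ 2
      = ∑ j, u j ^ 2 - 2 * ∑ j, u j * (∑ i, p i * w i j) + ∑ j, (∑ i, p i * w i j) ^ 2 := by
    rw [Finset.mul_sum, ← Finset.sum_sub_distrib, ← Finset.sum_add_distrib]
    exact Finset.sum_congr rfl fun j _ => by ring
  rw [hexpand, hcross, hsq] at h0
  linarith

lemma sum_sub_sq_expand {n : ℕ} (a b : Fin n → ℝ) :
    ∑ j, (a j - b j) ^ 2 = ∑ j, a j ^ 2 - 2 * ∑ j, a j * b j + ∑ j, b j ^ 2 := by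
  rw [Finset.mul_sum, ← Finset.sum_sub_distrib, ← Finset.sum_add_distrib]
  exact Finset.sum_congr rfl fun j _ => by ring

open Matrix in
lemma exists_col_onb {J K : ℕ} (X : Matrix (Fin J) (Fin K) ℝ) :
    ∃ (r : ℕ) (w : Fin r → Fin J → ℝ), r = X.rank ∧
      (∀ i i', (∑ j, w i j * w i' j) = if i = i' then 1 else 0) ∧
      (∀ j k, X j k = ∑ i, (∑ j', w i j' * X j' k) * w i j) := by
  classical
  set e : (Fin J → ℝ) ≃ₗ[ℝ] EuclideanSpace ℝ (Fin J) :=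
    (WithLp.linearEquiv 2 ℝ (Fin J → ℝ)).symm with he
  set W : Submodule ℝ (EuclideanSpace ℝ (Fin J)) :=
    Submodule.span ℝ (Set.range fun k => e (Xᵀ k)) with hW
  have hdim : Module.finrank ℝ W = X.rank := by
    rw [Matrix.rank_eq_finrank_span_cols]
    have h1 : W = Submodule.map (e : (Fin J → ℝ) →ₗ[ℝ] EuclideanSpace ℝ (Fin J)) (Submodule.span ℝ (Set.range Xᵀ)) := by
      rw [Submodule.map_span]
      congr 1
      exact congrArg (Submodule.span ℝ) (Set.range_comp (⇑(e : (Fin J → ℝ) →ₗ[ℝ] EuclideanSpace ℝ (Fin J))) (Xᵀ : Fin K → Fin J → ℝ))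
    rw [h1]
    exact LinearEquiv.finrank_map_eq e _
  set b := stdOrthonormalBasis ℝ W with hb
  set w : Fin (Module.finrank ℝ W) → Fin J → ℝ :=
    fun i => e.symm (b i : EuclideanSpace ℝ (Fin J)) with hwdef
  have hinner : ∀ (x x' : EuclideanSpace ℝ (Fin J)),
      (inner ℝ x x' : ℝ) = ∑ j, (e.symm x) j * (e.symm x') j := by
    intro x x'
    rw [PiLp.inner_apply]
    exact Finset.sum_congr rfl fun j _ => by
      simp [RCLike.inner_apply]
      exact mul_comm _ _
  refine ⟨Module.finrank ℝ W, w, hdim.symm ▸ rfl, ?_, ?_⟩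
  · intro i i'
    have horth := b.orthonormal
    rw [orthonormal_iff_ite] at horth
    have h2 := horth i i'
    rw [Submodule.coe_inner] at h2
    rw [← h2, hinner]
  · intro j k
    have hcol : e (Xᵀ k) ∈ W := Submodule.subset_span ⟨k, rfl⟩
    set x : W := ⟨e (Xᵀ k), hcol⟩ with hx
    have hrepr := b.sum_repr' x
    have hco : ((∑ i, (inner ℝ (b i) x : ℝ) • (b i) : W) : EuclideanSpace ℝ (Fin J))
        = e (Xᵀ k) := by rw [hrepr]
    rw [AddSubmonoidClass.coe_finset_sum] at hco
    have happ := congrArg (fun v => (e.symm v) j) hco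
    simp only [map_sum, LinearEquiv.symm_apply_apply] at happ
    have hXjk : Xᵀ k j = X j k := rfl
    rw [← hXjk, ← happ, Finset.sum_apply]
    refine Finset.sum_congr rfl fun i _ => ?_
    have hc : (inner ℝ (b i) x : ℝ) = ∑ j', w i j' * X j' k := by
      rw [Submodule.coe_inner, hinner]
      refine Finset.sum_congr rfl fun j' _ => ?_
      have : (x : EuclideanSpace ℝ (Fin J)) = e (Xᵀ k) := rfl
      rw [this, LinearEquiv.symm_apply_apply]
      rfl
    rw [← hc]
    simp only [SetLike.val_smul, _root_.map_smul, Pi.smul_apply, smul_eq_mul]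
    rfl

lemma card_filt {m R : ℕ} (h : R ≤ m) :
    (Finset.univ.filter (fun k : Fin m => (k:ℕ) < R)).card = R := by
  have he : (Finset.univ.filter fun k : Fin m => (k:ℕ) < R)
      = Finset.map (Fin.castLEEmb h) Finset.univ := by
    ext k
    simp only [mem_filter, mem_univ, true_and, mem_map]
    constructor
    · intro hk; exact ⟨⟨k, hk⟩, by simp [Fin.ext_iff]⟩
    · rintro ⟨a, ha⟩; rw [← ha]; simpa using a.2
  rw [he]; simp

lemma abel_bound {m R : ℕ} (σ : Fin m → ℝ) (hanti : Antitone σ) (hσnn : ∀ k, 0 ≤ σ k)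
    (t : Fin m → ℝ) (ht0 : ∀ k, 0 ≤ t k) (ht1 : ∀ k, t k ≤ 1) (htR : ∑ k, t k ≤ (R:ℝ)) :
    ∑ k, σ k ^ 2 * t k ≤ ∑ k ∈ Finset.univ.filter (fun k : Fin m => (k:ℕ) < R), σ k ^ 2 := by
  classical
  by_cases hRm : R < m
  · set s : ℝ := σ ⟨R, hRm⟩ ^ 2 with hs
    have hs0 : 0 ≤ s := sq_nonneg _
    set A := Finset.univ.filter (fun k : Fin m => (k:ℕ) < R) with hA
    set B := Finset.univ.filter (fun k : Fin m => ¬ (k:ℕ) < R) with hB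
    have hhi : ∀ k ∈ B, σ k ^ 2 ≤ s := by
      intro k hk
      rw [hB, mem_filter] at hk
      have hle : (⟨R, hRm⟩ : Fin m) ≤ k := by
        rw [Fin.le_def]; exact not_lt.mp hk.2
      exact pow_le_pow_left₀ (hσnn k) (hanti hle) 2
    have hlo : ∀ k ∈ A, s ≤ σ k ^ 2 := by
      intro k hk
      rw [hA, mem_filter] at hk
      have hle : k ≤ (⟨R, hRm⟩ : Fin m) := by
        rw [Fin.le_def]; exact hk.2.le
      exact pow_le_pow_left₀ (hσnn _) (hanti hle) 2
    have hsplit1 : ∑ k, σ k ^ 2 * t k = ∑ k ∈ A, σ k ^ 2 * t k + ∑ k ∈ B, σ k ^ 2 * t k :=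
      (Finset.sum_filter_add_sum_filter_not _ _ _).symm
    have hsplit2 : ∑ k, t k = ∑ k ∈ A, t k + ∑ k ∈ B, t k :=
      (Finset.sum_filter_add_sum_filter_not _ _ _).symm
    have h1 : ∑ k ∈ B, σ k ^ 2 * t k ≤ s * ∑ k ∈ B, t k := by
      rw [Finset.mul_sum]
      exact Finset.sum_le_sum fun k hk => mul_le_mul_of_nonneg_right (hhi k hk) (ht0 k)
    have h2 : s * ∑ k ∈ B, t k ≤ s * ((R:ℝ) - ∑ k ∈ A, t k) := by
      apply mul_le_mul_of_nonneg_left _ hs0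
      linarith
    have h3 : ∑ k ∈ A, (σ k ^ 2 - s) * t k ≤ ∑ k ∈ A, (σ k ^ 2 - s) :=
      Finset.sum_le_sum fun k hk =>
        mul_le_of_le_one_right (sub_nonneg.mpr (hlo k hk)) (ht1 k)
    have hcard : A.card = R := card_filt hRm.le
    have h4 : ∑ k ∈ A, (σ k ^ 2 - s) = ∑ k ∈ A, σ k ^ 2 - (R:ℝ) * s := by
      rw [Finset.sum_sub_distrib, Finset.sum_const, hcard, nsmul_eq_mul]
    have h5 : ∑ k ∈ A, (σ k ^ 2 - s) * t k
        = ∑ k ∈ A, σ k ^ 2 * t k - s * ∑ k ∈ A, t k := by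
      rw [Finset.mul_sum, ← Finset.sum_sub_distrib]
      exact Finset.sum_congr rfl fun k _ => by ring
    rw [hsplit1]
    have h6 := h1.trans h2
    rw [hA]
    nlinarith [h3, h4, h5]
  · push_neg at hRm
    have hfilt : Finset.univ.filter (fun k : Fin m => (k:ℕ) < R) = Finset.univ := by
      apply Finset.filter_true_of_mem
      intro k _
      exact lt_of_lt_of_le k.2 hRm
    rw [hfilt]
    exact Finset.sum_le_sum fun k _ =>
      mul_le_of_le_one_right (sq_nonneg _) (ht1 k)

lemma frob_svd {m J K : ℕ} (σ : Fin m → ℝ) (y : Fin m → Fin J → ℝ) (z : Fin m → Fin K → ℝ)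
    (hy : ∀ k l, (∑ j, y k j * y l j) = if k = l then 1 else 0)
    (hz : ∀ k l, (∑ j, z k j * z l j) = if k = l then 1 else 0)
    (S : Finset (Fin m)) :
    ∑ j, ∑ k, (∑ k' ∈ S, σ k' * y k' j * z k' k) ^ 2 = ∑ k' ∈ S, σ k' ^ 2 := by
  have h1 : ∀ j : Fin J, ∑ k, (∑ k' ∈ S, σ k' * y k' j * z k' k) ^ 2
      = ∑ k' ∈ S, (σ k' * y k' j) ^ 2 := by
    intro j
    have := orth_expand_sq z hz S (fun k' => σ k' * y k' j)
    simpa [mul_assoc] using this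
  simp only [h1]
  rw [Finset.sum_comm]
  refine Finset.sum_congr rfl fun k' _ => ?_
  have h2 : ∀ j, (σ k' * y k' j) ^ 2 = σ k' ^ 2 * (y k' j * y k' j) := fun j => by ring
  simp only [h2]
  rw [← Finset.mul_sum, hy k' k']
  simp

/-- Eckart–Young lower bound. -/
lemma eckart_young {J K R : ℕ} (A X : Matrix (Fin J) (Fin K) ℝ) (hrank : X.rank ≤ R)
    (σ : Fin (min J K) → ℝ) (y : Fin (min J K) → Fin J → ℝ) (z : Fin (min J K) → Fin K → ℝ)
    (hanti : Antitone σ) (hσnn : ∀ k, 0 ≤ σ k)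
    (hy : ∀ k l, (∑ j, y k j * y l j) = if k = l then 1 else 0)
    (hz : ∀ k l, (∑ j, z k j * z l j) = if k = l then 1 else 0)
    (hA : ∀ j k, A j k = ∑ k', σ k' * y k' j * z k' k) :
    ∑ k ∈ Finset.univ.filter (fun k : Fin (min J K) => R ≤ (k : ℕ)), σ k ^ 2
      ≤ frobSq (A - X) := by
  classical
  obtain ⟨r, w, hr, hw, hXexp⟩ := exists_col_onb X
  have hrR : r ≤ R := hr ▸ hrank
  set d : Fin r → Fin K → ℝ := fun i k => ∑ j, w i j * A j k with hd
  set u : Fin r → Fin K → ℝ := fun i k => ∑ j, w i j * X j k with hu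
  set c : Fin r → Fin (min J K) → ℝ := fun i k' => ∑ j, w i j * y k' j with hc
  have hcol : ∀ k : Fin K, ∑ j, A j k ^ 2 - ∑ i, d i k ^ 2
      ≤ ∑ j, (A j k - X j k) ^ 2 := by
    intro k
    have hXk : ∀ j, X j k = ∑ i, u i k * w i j := fun j => hXexp j k
    have hcross : ∑ j, A j k * X j k = ∑ i, u i k * d i k := by
      simp only [hXk]
      have h2 : ∀ j, A j k * (∑ i, u i k * w i j) = ∑ i, u i k * (w i j * A j k) := by
        intro j; rw [Finset.mul_sum]; exact Finset.sum_congr rfl fun i _ => by ring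
      simp only [h2]
      rw [Finset.sum_comm]
      exact Finset.sum_congr rfl fun i _ => by rw [← Finset.mul_sum]
    have hXsq : ∑ j, X j k ^ 2 = ∑ i, u i k ^ 2 := by
      simp only [hXk]
      exact orth_expand_sq w hw Finset.univ (fun i => u i k)
    have hdu : (0:ℝ) ≤ ∑ i, (d i k - u i k) ^ 2 :=
      Finset.sum_nonneg fun _ _ => sq_nonneg _
    have he1 := sum_sub_sq_expand (fun j => A j k) (fun j => X j k)
    have he2 := sum_sub_sq_expand (fun i => d i k) (fun i => u i k)
    have hdusym : ∑ i, d i k * u i k = ∑ i, u i k * d i k :=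
      Finset.sum_congr rfl fun i _ => by ring
    rw [he2, hdusym] at hdu
    rw [he1, hcross, hXsq]
    linarith
  have hfrob : frobSq (A - X) = ∑ k, ∑ j, (A j k - X j k) ^ 2 := by
    rw [frobSq, Finset.sum_comm]
    exact Finset.sum_congr rfl fun k _ => Finset.sum_congr rfl fun j _ => by
      rw [Matrix.sub_apply]
  have hstep2 : ∑ k, (∑ j, A j k ^ 2) - ∑ k, ∑ i, d i k ^ 2 ≤ frobSq (A - X) := by
    rw [hfrob, ← Finset.sum_sub_distrib]
    exact Finset.sum_le_sum fun k _ => hcol k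
  have hfrobA : ∑ k, (∑ j, A j k ^ 2) = ∑ k', σ k' ^ 2 := by
    rw [Finset.sum_comm]
    have h := frob_svd σ y z hy hz Finset.univ
    rw [← h]
    exact Finset.sum_congr rfl fun j _ => Finset.sum_congr rfl fun k _ => by rw [hA]
  have hdsvd : ∀ i k, d i k = ∑ k', (σ k' * c i k') * z k' k := by
    intro i k
    rw [hd]
    simp only [hA]
    have h2 : ∀ j, w i j * (∑ k', σ k' * y k' j * z k' k)
        = ∑ k', σ k' * (w i j * y k' j) * z k' k := by
      intro j; rw [Finset.mul_sum]; exact Finset.sum_congr rfl fun k' _ => by ring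
    simp only [h2]
    rw [Finset.sum_comm]
    refine Finset.sum_congr rfl fun k' _ => ?_
    rw [hc]
    simp only [Finset.sum_mul, Finset.mul_sum]
  have hdsq : ∀ i, ∑ k, d i k ^ 2 = ∑ k', σ k' ^ 2 * c i k' ^ 2 := by
    intro i
    simp only [hdsvd]
    have := orth_expand_sq z hz Finset.univ (fun k' => σ k' * c i k')
    rw [this]
    exact Finset.sum_congr rfl fun k' _ => by ring
  set t : Fin (min J K) → ℝ := fun k' => ∑ i, c i k' ^ 2 with ht
  have hstep4 : ∑ k, ∑ i, d i k ^ 2 = ∑ k', σ k' ^ 2 * t k' := by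
    rw [Finset.sum_comm]
    simp only [hdsq]
    rw [Finset.sum_comm]
    refine Finset.sum_congr rfl fun k' _ => ?_
    rw [ht, Finset.mul_sum]
  have ht0 : ∀ k', 0 ≤ t k' := fun k' => Finset.sum_nonneg fun _ _ => sq_nonneg _
  have ht1 : ∀ k', t k' ≤ 1 := by
    intro k'
    have hb := bessel_sum w hw (y k')
    have hyy : ∑ j, y k' j ^ 2 = 1 := by
      have h := hy k' k'
      rw [if_pos rfl] at h
      rw [← h]
      exact Finset.sum_congr rfl fun j _ => by rw [sq]
    rw [hyy] at hb
    exact hb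
  have htR : ∑ k', t k' ≤ (R:ℝ) := by
    have h1 : ∑ k', t k' = ∑ i, ∑ k', c i k' ^ 2 := Finset.sum_comm
    have h2 : ∀ i : Fin r, ∑ k', c i k' ^ 2 ≤ 1 := by
      intro i
      have hb := bessel_sum y hy (w i)
      have hww : ∑ j, w i j ^ 2 = 1 := by
        have h := hw i i
        rw [if_pos rfl] at h
        rw [← h]
        exact Finset.sum_congr rfl fun j _ => by rw [sq]
      rw [hww] at hb
      refine le_trans (le_of_eq ?_) hb
      exact Finset.sum_congr rfl fun k' _ => by
        rw [hc]
        congr 1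
        exact Finset.sum_congr rfl fun j _ => by ring
    calc ∑ k', t k' = ∑ i, ∑ k', c i k' ^ 2 := h1
      _ ≤ ∑ i : Fin r, (1:ℝ) := Finset.sum_le_sum fun i _ => h2 i
      _ = (r:ℝ) := by simp
      _ ≤ (R:ℝ) := Nat.cast_le.mpr hrR
  have habel := abel_bound σ hanti hσnn t ht0 ht1 htR
  have hsplit : ∑ k', σ k' ^ 2
      = ∑ k' ∈ Finset.univ.filter (fun k : Fin (min J K) => (k:ℕ) < R), σ k' ^ 2
        + ∑ k' ∈ Finset.univ.filter (fun k : Fin (min J K) => ¬ (k:ℕ) < R), σ k' ^ 2 :=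
    (Finset.sum_filter_add_sum_filter_not _ _ _).symm
  have hfc : Finset.univ.filter (fun k : Fin (min J K) => ¬ (k:ℕ) < R)
      = Finset.univ.filter (fun k : Fin (min J K) => R ≤ (k:ℕ)) := by
    apply Finset.filter_congr
    intro k _
    simp [not_lt]
  rw [hfc] at hsplit
  rw [hfrobA, hstep4] at hstep2
  linarith

lemma frob_sub_expand {J K : ℕ} (M N : Matrix (Fin J) (Fin K) ℝ) :
    frobSq (M - N) = frobSq M - 2 * (∑ j, ∑ k, M j k * N j k) + frobSq N := by
  rw [frobSq, frobSq, frobSq]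
  rw [Finset.mul_sum, ← Finset.sum_sub_distrib, ← Finset.sum_add_distrib]
  refine Finset.sum_congr rfl fun j _ => ?_
  rw [Finset.mul_sum, ← Finset.sum_sub_distrib, ← Finset.sum_add_distrib]
  refine Finset.sum_congr rfl fun k _ => ?_
  rw [Matrix.sub_apply]; ring

lemma weighted_identity {J K N : ℕ} (lam : Fin N → ℝ) (v : Fin N → (Fin J × Fin K) → ℝ)
    (hvd : ∀ i, (∑ p, v i p * v i p) = 1)
    (hΛ : 0 < ∑ i, lam i) (X : Matrix (Fin J) (Fin K) ℝ) :
    ∑ i, lam i * frobSq (Vbar v i - X)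
      = (∑ i, lam i) * (1 - frobSq (centroid lam v))
        + (∑ i, lam i) * frobSq (centroid lam v - X) := by
  have hΛne : (∑ i, lam i) ≠ 0 := ne_of_gt hΛ
  have hC : ∀ j k, (∑ i, lam i) * centroid lam v j k = ∑ i, lam i * Vbar v i j k := by
    intro j k
    rw [_root_.centroid, Matrix.smul_apply, smul_eq_mul, ← mul_assoc,
      mul_inv_cancel₀ hΛne, one_mul, Matrix.sum_apply]
    exact Finset.sum_congr rfl fun i _ => by rw [Matrix.smul_apply, smul_eq_mul]
  have hVn : ∀ i, frobSq (Vbar v i) = 1 := by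
    intro i
    have h2 : ∑ p : Fin J × Fin K, v i p * v i p = ∑ j, ∑ k, v i (j, k) * v i (j, k) :=
      Fintype.sum_prod_type (fun p => v i p * v i p)
    rw [frobSq, ← hvd i, h2]
    refine Finset.sum_congr rfl fun j _ => Finset.sum_congr rfl fun k _ => ?_
    rw [sq]
    rfl
  have hswap : ∑ i, lam i * (∑ j, ∑ k, Vbar v i j k * X j k)
      = ∑ j, ∑ k, (∑ i, lam i * Vbar v i j k) * X j k := by
    have h1 : ∀ i, lam i * (∑ j, ∑ k, Vbar v i j k * X j k)
        = ∑ j, ∑ k, lam i * Vbar v i j k * X j k := by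
      intro i
      rw [Finset.mul_sum]
      exact Finset.sum_congr rfl fun j _ => by
        rw [Finset.mul_sum]
        exact Finset.sum_congr rfl fun k _ => by ring
    simp only [h1]
    rw [Finset.sum_comm]
    refine Finset.sum_congr rfl fun j _ => ?_
    rw [Finset.sum_comm]
    refine Finset.sum_congr rfl fun k _ => ?_
    rw [Finset.sum_mul]
  have hCX : ∑ j, ∑ k, (∑ i, lam i * Vbar v i j k) * X j k
      = (∑ i, lam i) * (∑ j, ∑ k, centroid lam v j k * X j k) := by
    rw [Finset.mul_sum]
    refine Finset.sum_congr rfl fun j _ => ?_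
    rw [Finset.mul_sum]
    refine Finset.sum_congr rfl fun k _ => ?_
    rw [← hC, mul_assoc]
  have hlhs : ∑ i, lam i * frobSq (Vbar v i - X)
      = ∑ i, (lam i - 2 * (lam i * (∑ j, ∑ k, Vbar v i j k * X j k)) + lam i * frobSq X) := by
    refine Finset.sum_congr rfl fun i _ => ?_
    rw [frob_sub_expand, hVn]
    ring
  rw [hlhs, Finset.sum_add_distrib, Finset.sum_sub_distrib, ← Finset.sum_mul,
    ← Finset.mul_sum, hswap, hCX, frob_sub_expand]
  ring

/-- The dominating functional `inf{ ½∑ᵢ λᵢ‖V̄ᵢ − X‖_F² : rank X ≤ R }` equals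
`½[Λ(1 − ‖V̄^C‖_F²) + Λ ∑_{k>R} σₖ(V̄^C)²]`, and the infimum is attained at the rank-`R`
truncated SVD of the centroid `V̄^C`. Here `σ, y, z` form an SVD of `V̄^C`
(σ decreasing, nonnegative, `y`, `z` orthonormal). -/
theorem stmt17 (I J K R : ℕ) (hI : 0 < I) (hJ : 0 < J) (hK : 0 < K) (hR : 0 < R)
    (T : Fin I → Fin J → Fin K → ℝ)
    (lam : Fin (J * K) → ℝ) (v : Fin (J * K) → (Fin J × Fin K) → ℝ)
    (hvorth : ∀ i i', (∑ p, v i p * v i' p) = if i = i' then 1 else 0)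
    (hlam : ∀ i, 0 ≤ lam i)
    (hM : ∀ p q, Mmat T p q = ∑ i, lam i * v i p * v i q)
    (hΛ : 0 < ∑ i, lam i)
    (σ : Fin (min J K) → ℝ) (y : Fin (min J K) → Fin J → ℝ)
    (z : Fin (min J K) → Fin K → ℝ)
    (hanti : Antitone σ) (hσnn : ∀ k, 0 ≤ σ k)
    (hy : ∀ k l, (∑ j, y k j * y l j) = if k = l then 1 else 0)
    (hz : ∀ k l, (∑ j, z k j * z l j) = if k = l then 1 else 0)
    (hSVD : ∀ j k, centroid lam v j k = ∑ k', σ k' * y k' j * z k' k) :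
    sInf {val : ℝ | ∃ X : Matrix (Fin J) (Fin K) ℝ, X.rank ≤ R ∧
        val = (1 / 2) * ∑ i, lam i * frobSq (Vbar v i - X)} =
      (1 / 2) * ((∑ i, lam i) * (1 - frobSq (centroid lam v)) +
        (∑ i, lam i) *
          ∑ k ∈ Finset.univ.filter (fun k : Fin (min J K) => R ≤ (k : ℕ)), (σ k) ^ 2) ∧
    (1 / 2) * (∑ i, lam i * frobSq (Vbar v i -
        Matrix.of fun j k =>
          ∑ k' ∈ Finset.univ.filter (fun k' : Fin (min J K) => (k' : ℕ) < R),
            σ k' * y k' j * z k' k)) =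
      (1 / 2) * ((∑ i, lam i) * (1 - frobSq (centroid lam v)) +
        (∑ i, lam i) *
          ∑ k ∈ Finset.univ.filter (fun k : Fin (min J K) => R ≤ (k : ℕ)), (σ k) ^ 2) ∧
    (Matrix.of fun j k =>
        ∑ k' ∈ Finset.univ.filter (fun k' : Fin (min J K) => (k' : ℕ) < R),
          σ k' * y k' j * z k' k : Matrix (Fin J) (Fin K) ℝ).rank ≤ R := by
  classical
  have hvd : ∀ i, (∑ p, v i p * v i p) = 1 := by
    intro i
    have h := hvorth i i
    rwa [if_pos rfl] at h
  set X₀ : Matrix (Fin J) (Fin K) ℝ :=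
    Matrix.of (fun j k =>
      ∑ k' ∈ Finset.univ.filter (fun k' : Fin (min J K) => (k' : ℕ) < R),
        σ k' * y k' j * z k' k) with hX₀
  -- rank bound
  have hrank : X₀.rank ≤ R := by
    set S := Finset.univ.filter (fun k' : Fin (min J K) => (k' : ℕ) < R) with hS
    set P : Matrix (Fin J) {x // x ∈ S} ℝ := Matrix.of (fun j k' => σ k'.1 * y k'.1 j) with hP
    set Q : Matrix {x // x ∈ S} (Fin K) ℝ := Matrix.of (fun k' k => z k'.1 k) with hQ
    have hfac : X₀ = P * Q := by
      ext j k
      rw [Matrix.mul_apply]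
      have : X₀ j k = ∑ k' ∈ S, σ k' * y k' j * z k' k := rfl
      rw [this, ← Finset.sum_coe_sort S (fun k' => σ k' * y k' j * z k' k)]
      rfl
    rw [hfac]
    calc (P * Q).rank ≤ P.rank := Matrix.rank_mul_le_left P Q
      _ ≤ Fintype.card {x // x ∈ S} := Matrix.rank_le_card_width P
      _ = S.card := Fintype.card_coe S
      _ ≤ R := by
        have h : S.card ≤ (Finset.range R).card := by
          apply Finset.card_le_card_of_injOn (fun k : Fin (min J K) => (k:ℕ))
          · intro k hk
            rw [hS, Finset.mem_coe, Finset.mem_filter] at hk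
            exact Finset.mem_coe.mpr (Finset.mem_range.mpr hk.2)
          · exact Fin.val_injective.injOn
        simpa using h
  -- frobSq of centroid minus truncation
  have hfCX₀ : frobSq (centroid lam v - X₀)
      = ∑ k ∈ Finset.univ.filter (fun k : Fin (min J K) => R ≤ (k:ℕ)), σ k ^ 2 := by
    have hfc : Finset.univ.filter (fun k : Fin (min J K) => ¬ (k:ℕ) < R)
        = Finset.univ.filter (fun k : Fin (min J K) => R ≤ (k:ℕ)) := by
      apply Finset.filter_congr
      intro k _
      simp [not_lt]
    have hentry : ∀ j k, (centroid lam v - X₀) j k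
        = ∑ k' ∈ Finset.univ.filter (fun k' : Fin (min J K) => ¬ (k' : ℕ) < R),
            σ k' * y k' j * z k' k := by
      intro j k
      have hfull := Finset.sum_filter_add_sum_filter_not Finset.univ
        (fun k' : Fin (min J K) => (k' : ℕ) < R) (fun k' => σ k' * y k' j * z k' k)
      have hX0jk : X₀ j k
          = ∑ k' ∈ Finset.univ.filter (fun k' : Fin (min J K) => (k' : ℕ) < R),
              σ k' * y k' j * z k' k := rfl
      rw [Matrix.sub_apply, hSVD, hX0jk]
      linarith
    rw [frobSq]
    simp only [hentry]
    rw [frob_svd σ y z hy hz _, hfc]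
  -- second conjunct
  have h2 : (1 / 2) * (∑ i, lam i * frobSq (Vbar v i - X₀))
      = (1 / 2) * ((∑ i, lam i) * (1 - frobSq (centroid lam v)) +
        (∑ i, lam i) *
          ∑ k ∈ Finset.univ.filter (fun k : Fin (min J K) => R ≤ (k : ℕ)), (σ k) ^ 2) := by
    rw [weighted_identity lam v hvd hΛ X₀, hfCX₀]
  refine ⟨?_, h2, hrank⟩
  apply IsLeast.csInf_eq
  constructor
  · exact ⟨X₀, hrank, h2.symm⟩
  · rintro val ⟨X, hXr, rfl⟩
    have hEY := eckart_young (centroid lam v) X hXr σ y z hanti hσnn hy hz hSVD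
    have hid := weighted_identity lam v hvd hΛ X
    have hmul : (∑ i, lam i) *
        (∑ k ∈ Finset.univ.filter (fun k : Fin (min J K) => R ≤ (k : ℕ)), (σ k) ^ 2)
        ≤ (∑ i, lam i) * frobSq (centroid lam v - X) :=
      mul_le_mul_of_nonneg_left hEY hΛ.le
    rw [hid]
    linarith
end
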